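/- arXiv:q-alg/9607003 — 2 statements merged into one kernel-verified Lean document; each statement's English description precedes it below -/
import Mathlib

section
/- For generic values of q, t, and t_a, every complex-valued function on the set of grid points {τq^ν : ν ∈ Λ_N} coincides with the restriction to these grid points of a unique Laurent polynomial in the space H_N^{qR} = Span{m_λ : λ ∈ Λ_N}; that is, the restriction map from H_N^{qR} to the space of all complex functions on the grid is a linear isomorphism. -/
open scoped BigOperators Classical

noncomputable section

namespace QR

/-- q-shifted factorial `(a;q)_m`. -/
def qPoch (q a : ℂ) (m : ℕ) : ℂ := ∏ i ∈ Finset.range m, (1 - a * q ^ i)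

/-- dominance: weakly decreasing vector of nonnegative integers. -/
def isDominant {n : ℕ} (ν : Fin n → ℕ) : Prop := ∀ i j : Fin n, i ≤ j → ν j ≤ ν i

/-- the alcove `Λ_N` of dominant weights with entries at most `N`. -/
def alcove (n N : ℕ) : Finset (Fin n → ℕ) :=
  ((Finset.univ : Finset (Fin n → Fin (N + 1))).image fun ν i => (ν i : ℕ)).filter
    fun ν => isDominant ν

/-- dominance partial order on weights. -/
def domLE {n : ℕ} (μ lam : Fin n → ℕ) : Prop :=
  ∀ k : Fin n, ∑ j ∈ Finset.univ.filter (· ≤ k), μ j ≤ ∑ j ∈ Finset.univ.filter (· ≤ k), lam j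

/-- the orbit of a dominant weight under permutations and sign flips. -/
def signedOrbit {n : ℕ} (lam : Fin n → ℕ) : Finset (Fin n → ℤ) :=
  Finset.image
    (fun pe : Equiv.Perm (Fin n) × (Fin n → Bool) =>
      fun i => if pe.2 i then (lam (pe.1 i) : ℤ) else -(lam (pe.1 i) : ℤ))
    Finset.univ

/-- symmetrized monomial `m_λ`. -/
def mono {n : ℕ} (lam : Fin n → ℕ) (z : Fin n → ℂ) : ℂ :=
  ∑ μ ∈ signedOrbit lam, ∏ i, z i ^ μ i

/-- numerator of the coefficient `V_{ε j}` of Koornwinder's operator. -/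
def VNum {n : ℕ} (t : ℂ) (T : Fin 4 → ℂ) (ε : ℤ) (j : Fin n) (z : Fin n → ℂ) : ℂ :=
  (∏ r, (1 - T r * z j ^ ε)) *
    ∏ k ∈ Finset.univ.erase j, ((1 - t * z j ^ ε * z k) * (1 - t * z j ^ ε * (z k)⁻¹))

/-- denominator of the coefficient `V_{ε j}` of Koornwinder's operator. -/
def VDen {n : ℕ} (q : ℂ) (ε : ℤ) (j : Fin n) (z : Fin n → ℂ) : ℂ :=
  ((1 - z j ^ (2 * ε)) * (1 - q * z j ^ (2 * ε))) *
    ∏ k ∈ Finset.univ.erase j, ((1 - z j ^ ε * z k) * (1 - z j ^ ε * (z k)⁻¹))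

/-- coefficient `V_{ε j}` of Koornwinder's operator. -/
def Vcoef {n : ℕ} (q t : ℂ) (T : Fin 4 → ℂ) (ε : ℤ) (j : Fin n) (z : Fin n → ℂ) : ℂ :=
  VNum t T ε j z / VDen q ε j z

/-- Koornwinder's second order q-difference operator `D`. -/
def Dop {n : ℕ} (q t : ℂ) (T : Fin 4 → ℂ) (f : (Fin n → ℂ) → ℂ) (z : Fin n → ℂ) : ℂ :=
  ∑ j, (Vcoef q t T 1 j z * (f (Function.update z j (q * z j)) - f z)
      + Vcoef q t T (-1) j z * (f (Function.update z j (q⁻¹ * z j)) - f z))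

/-- eigenvalue `E_{λ,λ}`. -/
def Eval {n : ℕ} (q t : ℂ) (T : Fin 4 → ℂ) (lam : Fin n → ℕ) : ℂ :=
  ∑ i : Fin n,
    (q⁻¹ * (∏ r, T r) * t ^ (2 * n - (i : ℕ) - 2) * (q ^ lam i - 1)
      + t ^ (i : ℕ) * (q ^ (-(lam i : ℤ)) - 1))

/-- `p` is the monic multivariable Askey-Wilson polynomial attached to `lam`. -/
def IsAW {n : ℕ} (q t : ℂ) (T : Fin 4 → ℂ) (lam : Fin n → ℕ) (p : (Fin n → ℂ) → ℂ) : Prop :=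
  (∃ c : (Fin n → ℕ) →₀ ℂ,
    (∀ μ ∈ c.support, isDominant μ ∧ domLE μ lam ∧ μ ≠ lam) ∧
    ∀ z : Fin n → ℂ, (∀ i, z i ≠ 0) →
      p z = mono lam z + c.sum fun μ coef => coef * mono μ z) ∧
  ∀ z : Fin n → ℂ, (∀ i, z i ≠ 0) →
    (∀ j : Fin n, VDen q 1 j z ≠ 0 ∧ VDen q (-1) j z ≠ 0) →
    Dop q t T p z = Eval q t T lam * p z

/-- `τ_j = t^(n-j) t_a`. -/
def tauv (n : ℕ) (t ta : ℂ) (i : Fin n) : ℂ := t ^ (n - 1 - (i : ℕ)) * ta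

/-- the grid point `τ q^ν`. -/
def gridZ (n : ℕ) (q t ta : ℂ) (ν : Fin n → ℕ) : Fin n → ℂ := fun i => tauv n t ta i * q ^ ν i

/-- pairs `1 ≤ j < k ≤ n`. -/
def pairsF (n : ℕ) : Finset (Fin n × Fin n) := Finset.univ.filter fun p => p.1 < p.2

/-- the factor `c₀(ν)`, with `s` a chosen square root of `t₀t₁t₂t₃ q⁻¹`. -/
def c0fac {n : ℕ} (t s : ℂ) (ν : Fin n → ℕ) : ℂ := ∏ i : Fin n, (t ^ (n - 1 - (i : ℕ)) * s) ^ ν i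

/-- the square `c₀(ν)²` (a rational expression in the parameters). -/
def c0sq {n : ℕ} (q t : ℂ) (T : Fin 4 → ℂ) (ν : Fin n → ℕ) : ℂ :=
  ∏ i : Fin n, ((t ^ (n - 1 - (i : ℕ))) ^ 2 * (∏ r, T r) * q⁻¹) ^ ν i

/-- numerator of `C₊^{qR}(ν)` apart from the factor `c₀(ν)`. -/
def CpN (n : ℕ) (q t ta : ℂ) (ν : Fin n → ℕ) : ℂ :=
  (∏ p ∈ pairsF n,
      qPoch q (tauv n t ta p.1 * tauv n t ta p.2) (ν p.1 + ν p.2) *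
        qPoch q (tauv n t ta p.1 * (tauv n t ta p.2)⁻¹) (ν p.1 - ν p.2)) *
    ∏ i, qPoch q (tauv n t ta i ^ 2) (2 * ν i)

/-- denominator of `C₊^{qR}(ν)`. -/
def CpD (n : ℕ) (q t ta : ℂ) (T : Fin 4 → ℂ) (ν : Fin n → ℕ) : ℂ :=
  (∏ p ∈ pairsF n,
      qPoch q (t * tauv n t ta p.1 * tauv n t ta p.2) (ν p.1 + ν p.2) *
        qPoch q (t * tauv n t ta p.1 * (tauv n t ta p.2)⁻¹) (ν p.1 - ν p.2)) *
    ∏ i, ∏ r, qPoch q (T r * tauv n t ta i) (ν i)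

/-- numerator of `C₋^{qR}(ν)` apart from the factor `c₀(ν)`. -/
def CmN (n : ℕ) (q t ta : ℂ) (T : Fin 4 → ℂ) (ν : Fin n → ℕ) : ℂ :=
  (∏ p ∈ pairsF n,
      qPoch q (t⁻¹ * q * tauv n t ta p.1 * tauv n t ta p.2) (ν p.1 + ν p.2) *
        qPoch q (t⁻¹ * q * tauv n t ta p.1 * (tauv n t ta p.2)⁻¹) (ν p.1 - ν p.2)) *
    ∏ i, ∏ r, qPoch q ((T r)⁻¹ * q * tauv n t ta i) (ν i)

/-- denominator of `C₋^{qR}(ν)`. -/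
def CmD (n : ℕ) (q t ta : ℂ) (ν : Fin n → ℕ) : ℂ :=
  (∏ p ∈ pairsF n,
      qPoch q (q * tauv n t ta p.1 * tauv n t ta p.2) (ν p.1 + ν p.2) *
        qPoch q (q * tauv n t ta p.1 * (tauv n t ta p.2)⁻¹) (ν p.1 - ν p.2)) *
    ∏ i, qPoch q (q * tauv n t ta i ^ 2) (2 * ν i)

/-- `C₊^{qR}(ν)` (depends on the chosen square root `s`). -/
def Cplus (n : ℕ) (q t ta s : ℂ) (T : Fin 4 → ℂ) (ν : Fin n → ℕ) : ℂ :=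
  c0fac t s ν * CpN n q t ta ν / CpD n q t ta T ν

/-- `C₋^{qR}(ν)` (depends on the chosen square root `s`). -/
def Cminus (n : ℕ) (q t ta s : ℂ) (T : Fin 4 → ℂ) (ν : Fin n → ℕ) : ℂ :=
  c0fac t s ν * CmN n q t ta T ν / CmD n q t ta ν

/-- the discrete weight `Δ^{qR}(ν) = 1/(C₊^{qR}(ν) C₋^{qR}(ν))`, a rational expression. -/
def weightQR (n : ℕ) (q t ta : ℂ) (T : Fin 4 → ℂ) (ν : Fin n → ℕ) : ℂ :=
  (CpD n q t ta T ν * CmD n q t ta ν) / (c0sq q t T ν * CpN n q t ta ν * CmN n q t ta T ν)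

/-- the discrete bilinear form `⟨f,g⟩_N^{qR}`. -/
def braket (n N : ℕ) (q t ta : ℂ) (T : Fin 4 → ℂ) (f g : (Fin n → ℂ) → ℂ) : ℂ :=
  ∑ ν ∈ alcove n N, f (gridZ n q t ta ν) * g (gridZ n q t ta ν) * weightQR n q t ta T ν

end QR

/-!
Multiplying the row of `ν` by `z^N` (`z = τ q^ν`) turns the collocation matrix
`(m_μ(τ q^ν))_{ν,μ ∈ Λ_N}` into a matrix of polynomials in `(q, t, t_a)`; its determinant `P`
vanishes wherever the collocation matrix is singular. To see `P ≠ 0`, set `q = t = t_a = X`: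
the entry `(ν, μ)` becomes `∑_w X^{⟨ν + ρ, N + w⟩}` over the signed orbit of `μ`, with
`ρ = (n, n-1, …, 1)`. By the rearrangement inequality its top term is the single one `w = μ`,
and `∑_ν ⟨π ν, ν⟩ < ∑_ν ⟨ν, ν⟩` for every permutation `π ≠ 1` of `Λ_N`, so the top coefficient
of the determinant is the one of the diagonal product, namely `1`.
-/

open Finset Polynomial

theorem Polynomial.coeff_prod_sum_of_natDegree_le {R ι : Type*} [CommSemiring R]
    (s : Finset ι) (f : ι → R[X]) (d : ι → ℕ) (h : ∀ i ∈ s, (f i).natDegree ≤ d i) :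
    (∏ i ∈ s, f i).coeff (∑ i ∈ s, d i) = ∏ i ∈ s, (f i).coeff (d i) := by
  induction s using Finset.induction_on with
  | empty => simp
  | insert a s ha ih =>
    have hs : ∀ i ∈ s, (f i).natDegree ≤ d i := fun i hi => h i (mem_insert_of_mem hi)
    rw [prod_insert ha, sum_insert ha, prod_insert ha,
      coeff_mul_add_eq_of_natDegree_le (h a (mem_insert_self a s))
        ((natDegree_prod_le _ _).trans (sum_le_sum hs)), ih hs]

theorem Matrix.coeff_det_eq_one_of_natDegree_le {R ι : Type*} [CommRing R] [Fintype ι]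
    [DecidableEq ι] (A : Matrix ι ι R[X]) (d : ι → ι → ℕ)
    (hA : ∀ i j, (A i j).natDegree ≤ d i j) (hdiag : ∀ i, (A i i).coeff (d i i) = 1)
    (hd : ∀ σ : Equiv.Perm ι, σ ≠ 1 → ∑ i, d (σ i) i < ∑ i, d i i) :
    A.det.coeff (∑ i, d i i) = 1 := by
  rw [det_apply, finsetSum_coeff, sum_eq_single_of_mem 1 (mem_univ _)]
  · simp [coeff_prod_sum_of_natDegree_le _ _ _ fun i _ => hA i i, hdiag]
  · intro σ _ hσ
    rw [coeff_smul, coeff_eq_zero_of_natDegree_lt, smul_zero]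
    exact (natDegree_prod_le _ _).trans_lt ((sum_le_sum fun i _ => hA (σ i) i).trans_lt (hd σ hσ))

theorem two_mul_dotProduct_le {κ : Type*} [Fintype κ] (a b : κ → ℕ) :
    2 * (a ⬝ᵥ b) ≤ a ⬝ᵥ a + b ⬝ᵥ b := by
  simp only [dotProduct, mul_sum, ← sum_add_distrib]
  exact sum_le_sum fun i _ => by nlinarith [two_mul_le_add_sq (a i) (b i)]

theorem two_mul_dotProduct_lt {κ : Type*} [Fintype κ] {a b : κ → ℕ} (hab : a ≠ b) :
    2 * (a ⬝ᵥ b) < a ⬝ᵥ a + b ⬝ᵥ b := by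
  obtain ⟨i₀, hi₀⟩ := Function.ne_iff.1 hab
  simp only [dotProduct, mul_sum, ← sum_add_distrib]
  refine sum_lt_sum (fun i _ => by nlinarith [two_mul_le_add_sq (a i) (b i)]) ⟨i₀, mem_univ _, ?_⟩
  zify at hi₀ ⊢
  nlinarith [mul_self_pos.2 (sub_ne_zero.2 hi₀)]

theorem sum_dotProduct_comp_perm_lt {ι κ : Type*} [Fintype ι] [Fintype κ] {f : ι → κ → ℕ}
    (hf : Function.Injective f) {π : Equiv.Perm ι} (hπ : π ≠ 1) :
    ∑ x, f (π x) ⬝ᵥ f x < ∑ x, f x ⬝ᵥ f x := by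
  obtain ⟨x₀, hx₀⟩ : ∃ x, π x ≠ x := not_forall.1 fun h => hπ (Equiv.ext h)
  have h2 : 2 * ∑ x, f (π x) ⬝ᵥ f x < 2 * ∑ x, f x ⬝ᵥ f x :=
    calc 2 * ∑ x, f (π x) ⬝ᵥ f x = ∑ x, 2 * (f (π x) ⬝ᵥ f x) := mul_sum _ _ _
      _ < ∑ x, (f (π x) ⬝ᵥ f (π x) + f x ⬝ᵥ f x) :=
          sum_lt_sum (fun x _ => two_mul_dotProduct_le _ _)
            ⟨x₀, mem_univ _, two_mul_dotProduct_lt fun h => hx₀ (hf h)⟩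
      _ = 2 * ∑ x, f x ⬝ᵥ f x := by
          rw [sum_add_distrib, Equiv.sum_comp π fun x => f x ⬝ᵥ f x, two_mul]
  omega

theorem existsUnique_sum_mul_eq_of_det_ne_zero {α K : Type*} [DecidableEq α] [Field K]
    (s : Finset α) (g : α → α → K) (hg : (Matrix.of fun x y : s => g x y).det ≠ 0) (F : α → K) :
    ∃! c : α → K, (∀ y, y ∉ s → c y = 0) ∧ ∀ x ∈ s, ∑ y ∈ s, c y * g x y = F x := by
  set M : Matrix s s K := Matrix.of fun x y => g x y
  have hM : IsUnit M := (M.isUnit_iff_isUnit_det).2 hg.isUnit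
  have hsum : ∀ (c : α → K) (x : s), ∑ y ∈ s, c y * g x y = M.mulVec (fun y : s => c y) x := by
    intro c x
    simp only [Matrix.mulVec, dotProduct, M, Matrix.of_apply, mul_comm (g _ _)]
    exact (sum_coe_sort s fun y => c y * g x y).symm
  obtain ⟨b, hb⟩ := Matrix.mulVec_surjective_iff_isUnit.2 hM fun x : s => F x
  refine ⟨fun y => if h : y ∈ s then b ⟨y, h⟩ else 0, ⟨fun y hy => dif_neg hy, ?_⟩, ?_⟩
  · intro x hx
    refine (hsum _ ⟨x, hx⟩).trans ?_
    rw [← congrFun hb ⟨x, hx⟩]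
    congr 2
    funext y
    exact dif_pos y.2
  · rintro c ⟨hc₀, hc⟩
    have hcb : (fun y : s => c y) = b :=
      Matrix.mulVec_injective_iff_isUnit.2 hM (funext fun x => by rw [hb, ← hsum, hc x x.2])
    funext y
    by_cases hy : y ∈ s
    · rw [dif_pos hy, ← hcb]
    · rw [dif_neg hy, hc₀ y hy]

namespace QR

variable {n : ℕ}

theorem alcove_isDominant {N : ℕ} {ν : Fin n → ℕ} (h : ν ∈ alcove n N) : isDominant ν :=
  (mem_filter.1 h).2

theorem alcove_le {N : ℕ} {ν : Fin n → ℕ} (h : ν ∈ alcove n N) (i : Fin n) : ν i ≤ N := by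
  obtain ⟨f, -, rfl⟩ := mem_image.1 (mem_filter.1 h).1
  exact Nat.lt_succ_iff.1 (f i).2

theorem exists_perm_of_mem_signedOrbit {μ : Fin n → ℕ} {v : Fin n → ℤ}
    (hv : v ∈ signedOrbit μ) : ∃ σ : Equiv.Perm (Fin n), ∀ i, v i = μ (σ i) ∨ v i = -μ (σ i) := by
  obtain ⟨⟨σ, ε⟩, -, rfl⟩ := mem_image.1 hv
  exact ⟨σ, fun i => by cases h : ε i <;> simp [h]⟩

theorem self_mem_signedOrbit (μ : Fin n → ℕ) : (fun i => (μ i : ℤ)) ∈ signedOrbit μ :=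
  mem_image.2 ⟨⟨1, fun _ => true⟩, mem_univ _, by simp⟩

theorem neg_le_of_mem_signedOrbit {N : ℕ} {μ : Fin n → ℕ} (hμ : ∀ i, μ i ≤ N)
    {v : Fin n → ℤ} (hv : v ∈ signedOrbit μ) (i : Fin n) : -(N : ℤ) ≤ v i := by
  obtain ⟨σ, hσ⟩ := exists_perm_of_mem_signedOrbit hv
  have := hμ (σ i)
  rcases hσ i with h | h <;> rw [h] <;> omega

theorem sum_mul_lt_of_mem_signedOrbit {w : Fin n → ℤ} (hw : StrictAnti w) (hw₀ : ∀ i, 0 < w i)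
    {μ : Fin n → ℕ} (hμ : Antitone μ) {v : Fin n → ℤ} (hv : v ∈ signedOrbit μ)
    (hne : v ≠ fun i => (μ i : ℤ)) : ∑ i, w i * v i < ∑ i, w i * μ i := by
  obtain ⟨σ, hσ⟩ := exists_perm_of_mem_signedOrbit hv
  set g : Fin n → ℤ := fun i => μ i
  have hg : Antitone g := fun i j hij => Nat.cast_le.2 (hμ hij)
  have hvg : ∀ i, v i ≤ g (σ i) := fun i => by rcases hσ i with h | h <;> simp [h, g]
  have h₁ : ∑ i, w i * v i ≤ ∑ i, w i * g (σ i) :=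
    sum_le_sum fun i _ => mul_le_mul_of_nonneg_left (hvg i) (hw₀ i).le
  have hwg : Monovary w g := hw.antitone.monovary hg
  have h₂ : ∑ i, w i * g (σ i) ≤ ∑ i, w i * g i := hwg.sum_mul_comp_perm_le_sum_mul
  refine (h₁.trans h₂).lt_of_ne fun heq => hne ?_
  have hvσ : ∀ i, v i = g (σ i) := by
    have := (sum_eq_sum_iff_of_le fun i _ => mul_le_mul_of_nonneg_left (hvg i) (hw₀ i).le).1
      (le_antisymm h₁ (heq ▸ h₂))
    exact fun i => mul_left_cancel₀ (hw₀ i).ne' (this i (mem_univ i))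
  have hgσ : Antitone (g ∘ σ) := by
    have hmv := (hwg.sum_mul_comp_perm_eq_sum_mul_iff (σ := σ)).1 (le_antisymm h₂ (heq ▸ h₁))
    exact antitone_iff_forall_lt.2 fun i j hij => not_lt.1 fun hlt => (hw hij).not_ge (hmv hlt)
  have := Tuple.unique_antitone (σ := σ) (τ := 1) hgσ hg
  exact funext fun i => (hvσ i).trans (congrFun this i)

def gridExp (ν : Fin n → ℕ) (i : Fin n) : ℕ := ν i + (n - i)

theorem gridExp_strictAnti {ν : Fin n → ℕ} (hν : isDominant ν) : StrictAnti (gridExp ν) :=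
  fun i j hij => by
    have := hν i j hij.le
    have : (i : ℕ) < j := hij
    have := j.2
    simp only [gridExp]
    omega

/-- The variables `X 0, X 1, X 2` stand for `q, t, t_a`. -/
def gridMonomial (ν : Fin n → ℕ) (i : Fin n) : MvPolynomial (Fin 3) ℂ :=
  MvPolynomial.X 1 ^ (n - 1 - (i : ℕ)) * MvPolynomial.X 2 * MvPolynomial.X 0 ^ ν i

theorem eval_gridMonomial (q t ta : ℂ) (ν : Fin n → ℕ) (i : Fin n) :
    MvPolynomial.eval ![q, t, ta] (gridMonomial ν i) = gridZ n q t ta ν i := by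
  simp [gridMonomial, gridZ, tauv]

theorem aeval_gridMonomial (ν : Fin n → ℕ) (i : Fin n) :
    MvPolynomial.aeval (fun _ => (X : ℂ[X])) (gridMonomial ν i) = X ^ gridExp ν i := by
  have : n - 1 - (i : ℕ) + 1 + ν i = gridExp ν i := by
    have := i.2
    simp only [gridExp]
    omega
  simp only [gridMonomial, map_mul, map_pow, MvPolynomial.aeval_X, ← pow_succ, ← pow_add, this]

/-- `z^N m_μ(z)` at `z = τ q^ν`, as a polynomial in `(q, t, t_a)`: the factor `z^N` clears the
negative exponents of the Laurent polynomial `m_μ` once `μ ∈ Λ_N`. -/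
def gridMonoPoly (N : ℕ) (ν μ : Fin n → ℕ) : MvPolynomial (Fin 3) ℂ :=
  ∑ v ∈ signedOrbit μ, ∏ i, gridMonomial ν i ^ ((N : ℤ) + v i).toNat

theorem eval_gridMonoPoly {N : ℕ} {q t ta : ℂ} (hq : q ≠ 0) (ht : t ≠ 0) (hta : ta ≠ 0)
    (ν : Fin n → ℕ) {μ : Fin n → ℕ} (hμ : ∀ i, μ i ≤ N) :
    MvPolynomial.eval ![q, t, ta] (gridMonoPoly N ν μ)
      = (∏ i, gridZ n q t ta ν i ^ N) * mono μ (gridZ n q t ta ν) := by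
  rw [gridMonoPoly, map_sum, mono, mul_sum]
  refine sum_congr rfl fun v hv => ?_
  rw [map_prod, ← prod_mul_distrib]
  refine prod_congr rfl fun i _ => ?_
  have hz : gridZ n q t ta ν i ≠ 0 := by simp [gridZ, tauv, hq, ht, hta]
  rw [map_pow, eval_gridMonomial, ← zpow_natCast,
    Int.toNat_of_nonneg (by linarith [neg_le_of_mem_signedOrbit hμ hv i]), zpow_add₀ hz,
    zpow_natCast]

theorem aeval_gridMonoPoly (N : ℕ) (ν μ : Fin n → ℕ) :
    MvPolynomial.aeval (fun _ => (X : ℂ[X])) (gridMonoPoly N ν μ)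
      = ∑ v ∈ signedOrbit μ, X ^ ∑ i, gridExp ν i * ((N : ℤ) + v i).toNat := by
  simp only [gridMonoPoly, map_sum, map_prod, map_pow, aeval_gridMonomial, ← pow_mul,
    prod_pow_eq_pow_sum]

def gridDegree (N : ℕ) (ν μ : Fin n → ℕ) : ℕ := ∑ i, gridExp ν i * (N + μ i)

theorem sum_gridExp_mul_lt {N : ℕ} {ν μ : Fin n → ℕ} (hν : isDominant ν) (hμ : isDominant μ)
    (hμN : ∀ i, μ i ≤ N) {v : Fin n → ℤ} (hv : v ∈ signedOrbit μ)
    (hne : v ≠ fun i => (μ i : ℤ)) :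
    ∑ i, gridExp ν i * ((N : ℤ) + v i).toNat < gridDegree N ν μ := by
  have key := sum_mul_lt_of_mem_signedOrbit (w := fun i => (gridExp ν i : ℤ))
    (fun i j hij => Nat.cast_lt.2 (gridExp_strictAnti hν hij))
    (fun i => Nat.cast_pos.2 (by have := i.2; simp only [gridExp]; omega))
    (fun i j hij => hμ i j hij) hv hne
  have hcast : ∀ i, ((((N : ℤ) + v i).toNat : ℕ) : ℤ) = N + v i :=
    fun i => Int.toNat_of_nonneg (by linarith [neg_le_of_mem_signedOrbit hμN hv i])
  zify
  simp only [gridDegree, Nat.cast_sum, Nat.cast_mul, Nat.cast_add, hcast, mul_add,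
    sum_add_distrib]
  linarith

theorem sum_gridExp_mul_self (N : ℕ) (ν μ : Fin n → ℕ) :
    ∑ i, gridExp ν i * ((N : ℤ) + (μ i : ℤ)).toNat = gridDegree N ν μ :=
  sum_congr rfl fun i _ => by rw [← Nat.cast_add, Int.toNat_natCast]

theorem natDegree_aeval_gridMonoPoly_le {N : ℕ} {ν μ : Fin n → ℕ} (hν : isDominant ν)
    (hμ : isDominant μ) (hμN : ∀ i, μ i ≤ N) :
    (MvPolynomial.aeval (fun _ => (X : ℂ[X])) (gridMonoPoly N ν μ)).natDegree
      ≤ gridDegree N ν μ := by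
  rw [aeval_gridMonoPoly]
  refine natDegree_sum_le_of_forall_le _ _ fun v hv => (natDegree_X_pow_le _).trans ?_
  by_cases hvμ : v = fun i => (μ i : ℤ)
  · rw [hvμ, sum_gridExp_mul_self]
  · exact (sum_gridExp_mul_lt hν hμ hμN hv hvμ).le

theorem coeff_aeval_gridMonoPoly {N : ℕ} {ν μ : Fin n → ℕ} (hν : isDominant ν)
    (hμ : isDominant μ) (hμN : ∀ i, μ i ≤ N) :
    (MvPolynomial.aeval (fun _ => (X : ℂ[X])) (gridMonoPoly N ν μ)).coeff (gridDegree N ν μ)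
      = 1 := by
  rw [aeval_gridMonoPoly, finsetSum_coeff,
    sum_eq_single_of_mem _ (self_mem_signedOrbit μ) fun v hv hvμ => ?_]
  · rw [sum_gridExp_mul_self, coeff_X_pow_self]
  · rw [coeff_X_pow, if_neg (sum_gridExp_mul_lt hν hμ hμN hv hvμ).ne']

theorem gridDegree_eq (N : ℕ) (ν μ : Fin n → ℕ) :
    gridDegree N ν μ = ∑ i, ν i * N + ν ⬝ᵥ μ + ∑ i : Fin n, (n - i) * (N + μ i) := by
  simp only [gridDegree, gridExp, dotProduct, ← sum_add_distrib]
  exact sum_congr rfl fun i _ => by ring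

theorem sum_gridDegree_comp_perm_lt {ι : Type*} [Fintype ι] {f : ι → Fin n → ℕ}
    (hf : Function.Injective f) (N : ℕ) {π : Equiv.Perm ι} (hπ : π ≠ 1) :
    ∑ x, gridDegree N (f (π x)) (f x) < ∑ x, gridDegree N (f x) (f x) := by
  simp only [gridDegree_eq, sum_add_distrib]
  have := Equiv.sum_comp π fun x => ∑ i, f x i * N
  have := sum_dotProduct_comp_perm_lt hf hπ
  omega

def gridDet (n N : ℕ) : MvPolynomial (Fin 3) ℂ :=
  (Matrix.of fun ν μ : alcove n N => gridMonoPoly N ν.1 μ.1).det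

theorem gridDet_ne_zero (n N : ℕ) : gridDet n N ≠ 0 := by
  set A := Matrix.of fun ν μ : alcove n N =>
    MvPolynomial.aeval (fun _ => (X : ℂ[X])) (gridMonoPoly N ν.1 μ.1)
  have hA : MvPolynomial.aeval (fun _ => (X : ℂ[X])) (gridDet n N) = A.det := by
    rw [gridDet, AlgHom.map_det]
    rfl
  have hcoeff : A.det.coeff (∑ ν : alcove n N, gridDegree N ν.1 ν.1) = 1 :=
    Matrix.coeff_det_eq_one_of_natDegree_le A (fun ν μ => gridDegree N ν.1 μ.1)
      (fun ν μ => natDegree_aeval_gridMonoPoly_le (alcove_isDominant ν.2)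
        (alcove_isDominant μ.2) (alcove_le μ.2))
      (fun ν => coeff_aeval_gridMonoPoly (alcove_isDominant ν.2)
        (alcove_isDominant ν.2) (alcove_le ν.2))
      (fun π hπ => sum_gridDegree_comp_perm_lt Subtype.val_injective N hπ)
  intro h
  rw [← hA, h, map_zero, coeff_zero] at hcoeff
  exact zero_ne_one hcoeff

theorem eval_gridDet {N : ℕ} {q t ta : ℂ} (hq : q ≠ 0) (ht : t ≠ 0) (hta : ta ≠ 0) :
    MvPolynomial.eval ![q, t, ta] (gridDet n N)
      = (∏ ν : alcove n N, ∏ i, gridZ n q t ta ν.1 i ^ N)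
        * (Matrix.of fun ν μ : alcove n N => mono μ.1 (gridZ n q t ta ν.1)).det := by
  rw [gridDet, RingHom.map_det, ← Matrix.det_mul_column]
  congr 1
  ext ν μ
  exact eval_gridMonoPoly hq ht hta ν.1 (alcove_le μ.2)

theorem statement5_general (n N : ℕ) :
    ∃ P : MvPolynomial (Fin 3) ℂ, P ≠ 0 ∧
      ∀ q t ta : ℂ, q ≠ 0 → t ≠ 0 → ta ≠ 0 →
        MvPolynomial.eval ![q, t, ta] P ≠ 0 →
        ∀ F : (Fin n → ℕ) → ℂ,
          ∃! c : (Fin n → ℕ) → ℂ,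
            (∀ mu, mu ∉ alcove n N → c mu = 0) ∧
            ∀ ν ∈ alcove n N,
              (∑ mu ∈ alcove n N, c mu * mono mu (gridZ n q t ta ν)) = F ν := by
  refine ⟨gridDet n N, gridDet_ne_zero n N, fun q t ta hq ht hta hP F => ?_⟩
  rw [eval_gridDet hq ht hta] at hP
  exact existsUnique_sum_mul_eq_of_det_ne_zero (alcove n N)
    (fun ν μ => mono μ (gridZ n q t ta ν)) (right_ne_zero_of_mul hP) F

/-- For generic `q, t, t_a` (i.e. off the zero set of some nonzero polynomial
in these three parameters), every complex-valued function on the grid `{τ q^ν : ν ∈ Λ_N}`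
coincides on the grid with a unique element of `H_N^{qR} = Span{m_λ : λ ∈ Λ_N}`: the
restriction map from `H_N^{qR}` to functions on the grid is a linear isomorphism. -/
theorem statement5 (n N : ℕ) (hn : 1 ≤ n) :
    ∃ P : MvPolynomial (Fin 3) ℂ, P ≠ 0 ∧
      ∀ q t ta : ℂ, q ≠ 0 → t ≠ 0 → ta ≠ 0 →
        MvPolynomial.eval ![q, t, ta] P ≠ 0 →
        ∀ F : (Fin n → ℕ) → ℂ,
          ∃! c : (Fin n → ℕ) → ℂ,
            (∀ mu, mu ∉ alcove n N → c mu = 0) ∧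
            ∀ ν ∈ alcove n N,
              (∑ mu ∈ alcove n N, c mu * mono mu (gridZ n q t ta ν)) = F ν :=
  statement5_general n N

end QR
end
end

section
/- Let ε = ±1, let 1 ≤ j ≤ n, and suppose both ν and ν + ε e_j lie in the cone Λ. Then, as an identity of rational expressions in the parameters q, t, t₀, …, t₃, one has Δ^{qR}(ν + ε e_j) · V_{−εj}(τ q^{ν + ε e_j}) = Δ^{qR}(ν) · V_{εj}(τ q^{ν}). -/
open scoped BigOperators Classical

noncomputable section

namespace QR

/-! ### Auxiliary infrastructure for `statement17` -/

section Aux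

def expF (v : ℤ × ℤ × (Fin 4 → ℤ)) : Fin 6 → ℕ :=
  ![v.1.toNat, v.2.1.toNat, (v.2.2 0).toNat, (v.2.2 1).toNat, (v.2.2 2).toNat, (v.2.2 3).toNat]

def Lpoly (v : ℤ × ℤ × (Fin 4 → ℤ)) : MvPolynomial (Fin 6) ℂ :=
  MvPolynomial.monomial (Finsupp.equivFunOnFinite.symm (expF (-v.1, -v.2.1, -v.2.2))) 1
    - MvPolynomial.monomial (Finsupp.equivFunOnFinite.symm (expF v)) 1

lemma Lpoly_ne_zero (v : ℤ × ℤ × (Fin 4 → ℤ)) (hv : v ≠ 0) : Lpoly v ≠ 0 := by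
  have hne : expF (-v.1, -v.2.1, -v.2.2) ≠ expF v := by
    obtain ⟨a, b, c⟩ := v
    intro h
    apply hv
    have h0 : (-a).toNat = a.toNat := congrFun h 0
    have h1 : (-b).toNat = b.toNat := congrFun h 1
    have h2 : (-(c 0)).toNat = (c 0).toNat := congrFun h 2
    have h3 : (-(c 1)).toNat = (c 1).toNat := congrFun h 3
    have h4 : (-(c 2)).toNat = (c 2).toNat := congrFun h 4
    have h5 : (-(c 3)).toNat = (c 3).toNat := congrFun h 5
    have hc : ∀ r : Fin 4, c r = 0 := by intro r; fin_cases r <;> simp <;> omega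
    simp only [Prod.mk_eq_zero]
    refine ⟨by omega, by omega, funext hc⟩
  have hne' : Finsupp.equivFunOnFinite.symm (expF (-v.1, -v.2.1, -v.2.2)) ≠
      Finsupp.equivFunOnFinite.symm (expF v) := by
    simpa using hne
  unfold Lpoly
  intro h
  have := congrArg (MvPolynomial.coeff (Finsupp.equivFunOnFinite.symm (expF v))) h
  simp [MvPolynomial.coeff_monomial, hne'] at this

lemma eval_monomial_fun (x : Fin 6 → ℂ) (e : Fin 6 → ℕ) :
    MvPolynomial.eval x (MvPolynomial.monomial (Finsupp.equivFunOnFinite.symm e) (1:ℂ))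
      = ∏ i, x i ^ e i := by
  rw [MvPolynomial.eval_monomial, one_mul]
  rw [Finsupp.prod_fintype]
  · rfl
  · intro i; exact pow_zero _

lemma toNat_zpow (x : ℂ) (hx : x ≠ 0) (m : ℤ) : x ^ m.toNat = x ^ ((-m).toNat) * x ^ m := by
  rw [← zpow_natCast x m.toNat, ← zpow_natCast x (-m).toNat, ← zpow_add₀ hx]
  congr 1
  omega

lemma gadget (q t : ℂ) (T : Fin 4 → ℂ) (hq : q ≠ 0) (ht : t ≠ 0) (hT : ∀ r, T r ≠ 0)
    (v : ℤ × ℤ × (Fin 4 → ℤ))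
    (hL : MvPolynomial.eval ![q, t, T 0, T 1, T 2, T 3] (Lpoly v) ≠ 0) :
    (1 : ℂ) - q ^ v.1 * t ^ v.2.1 * ∏ r, T r ^ v.2.2 r ≠ 0 := by
  obtain ⟨a, b, c⟩ := v
  intro h
  apply hL
  have hu : q ^ a * t ^ b * ∏ r, T r ^ c r = 1 := (sub_eq_zero.mp h).symm
  rw [Lpoly, map_sub, eval_monomial_fun, eval_monomial_fun, sub_eq_zero]
  have E1 : (∏ i, (![q, t, T 0, T 1, T 2, T 3]) i ^ expF (-(a,b,c).1, -(a,b,c).2.1, -(a,b,c).2.2) i)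
      = q ^ (-a).toNat * t ^ (-b).toNat * (T 0) ^ (-(c 0)).toNat * (T 1) ^ (-(c 1)).toNat
        * (T 2) ^ (-(c 2)).toNat * (T 3) ^ (-(c 3)).toNat := by
    rw [Fin.prod_univ_six]; rfl
  have E2 : (∏ i, (![q, t, T 0, T 1, T 2, T 3]) i ^ expF (a,b,c) i)
      = q ^ a.toNat * t ^ b.toNat * (T 0) ^ (c 0).toNat * (T 1) ^ (c 1).toNat
        * (T 2) ^ (c 2).toNat * (T 3) ^ (c 3).toNat := by
    rw [Fin.prod_univ_six]; rfl
  rw [E1, E2]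
  rw [toNat_zpow q hq a, toNat_zpow t ht b, toNat_zpow (T 0) (hT 0) (c 0),
    toNat_zpow (T 1) (hT 1) (c 1), toNat_zpow (T 2) (hT 2) (c 2), toNat_zpow (T 3) (hT 3) (c 3)]
  rw [Fin.prod_univ_four] at hu
  linear_combination (-(q ^ (-a).toNat) * t ^ (-b).toNat * (T 0)^(-(c 0)).toNat * (T 1)^(-(c 1)).toNat
    * (T 2)^(-(c 2)).toNat * (T 3)^(-(c 3)).toNat) * hu

/-- the box of admissible exponent vectors. -/
def badBox (A B : ℕ) : Finset (ℤ × ℤ × (Fin 4 → ℤ)) :=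
  (((Finset.Icc (-(A:ℤ)) A) ×ˢ (Finset.Icc (-(B:ℤ)) B) ×ˢ
      (Fintype.piFinset fun _ : Fin 4 => Finset.Icc (-2:ℤ) 2))).filter (· ≠ 0)

def Ppoly (A B : ℕ) : MvPolynomial (Fin 6) ℂ :=
  (∏ i, MvPolynomial.X i) * ∏ v ∈ badBox A B, Lpoly v

lemma Ppoly_ne_zero (A B : ℕ) : Ppoly A B ≠ 0 := by
  apply mul_ne_zero
  · exact Finset.prod_ne_zero_iff.mpr fun i _ => MvPolynomial.X_ne_zero i
  · exact Finset.prod_ne_zero_iff.mpr fun v hv =>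
      Lpoly_ne_zero v (by simpa [badBox] using (Finset.mem_filter.mp hv).2)

lemma Ppoly_spec (A B : ℕ) (q t : ℂ) (T : Fin 4 → ℂ)
    (hP : MvPolynomial.eval ![q, t, T 0, T 1, T 2, T 3] (Ppoly A B) ≠ 0) :
    q ≠ 0 ∧ t ≠ 0 ∧ (∀ r, T r ≠ 0) ∧
      ∀ α β : ℤ, ∀ γ : Fin 4 → ℤ, |α| ≤ (A:ℤ) → |β| ≤ (B:ℤ) → (∀ r, |γ r| ≤ 2) →
        (α, β, γ) ≠ 0 → (1 : ℂ) - q ^ α * t ^ β * ∏ r, T r ^ γ r ≠ 0 := by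
  rw [Ppoly, map_mul, map_prod, map_prod] at hP
  have h1 := (mul_ne_zero_iff.mp hP).1
  have h2 := (mul_ne_zero_iff.mp hP).2
  rw [Finset.prod_ne_zero_iff] at h1 h2
  simp only [MvPolynomial.eval_X] at h1
  have hq : q ≠ 0 := by simpa using h1 0 (Finset.mem_univ 0)
  have ht : t ≠ 0 := by simpa using h1 1 (Finset.mem_univ 1)
  have hT : ∀ r : Fin 4, T r ≠ 0 := by
    intro r
    fin_cases r
    · simpa using h1 2 (Finset.mem_univ 2)
    · simpa using h1 3 (Finset.mem_univ 3)
    · simpa using h1 4 (Finset.mem_univ 4)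
    · simpa using h1 5 (Finset.mem_univ 5)
  refine ⟨hq, ht, hT, fun α β γ hα hβ hγ hne => ?_⟩
  apply gadget q t T hq ht hT (α, β, γ)
  apply h2
  simp only [badBox, Finset.mem_filter, Finset.mem_product, Finset.mem_Icc,
    Fintype.mem_piFinset]
  have hα' := abs_le.mp hα
  have hβ' := abs_le.mp hβ
  refine ⟨⟨⟨hα'.1, hα'.2⟩, ⟨hβ'.1, hβ'.2⟩, fun r => ?_⟩, hne⟩
  have := abs_le.mp (hγ r)
  exact ⟨this.1, this.2⟩

end Aux
section Aux2

/-- consolidated genericity hypothesis. -/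
def Hyp (A B : ℕ) (q t : ℂ) (T : Fin 4 → ℂ) : Prop :=
  ∀ α β : ℤ, ∀ γ : Fin 4 → ℤ, |α| ≤ (A:ℤ) → |β| ≤ (B:ℤ) → (∀ r, |γ r| ≤ 2) →
    (α, β, γ) ≠ 0 → (1 : ℂ) - q ^ α * t ^ β * ∏ r, T r ^ γ r ≠ 0

lemma zpow_dif (x : ℂ) (hx : x ≠ 0) (m1 m2 : ℕ) :
    x ^ ((m1:ℤ) - (m2:ℤ)) = x ^ m1 * (x ^ m2)⁻¹ := by
  rw [zpow_sub₀ hx, zpow_natCast, zpow_natCast, div_eq_mul_inv]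

lemma Hyp.facA {A B : ℕ} {q t : ℂ} {T : Fin 4 → ℂ} (H : Hyp A B q t T)
    (hq : q ≠ 0) (ht : t ≠ 0) (hT : ∀ r, T r ≠ 0) (a : Fin 4)
    (a1 a2 b1 b2 c1 c2 : ℕ) (ha1 : a1 ≤ A) (ha2 : a2 ≤ A) (hb1 : b1 ≤ B) (hb2 : b2 ≤ B)
    (hc1 : c1 ≤ 2) (hc2 : c2 ≤ 2)
    (hne : a1 ≠ a2 ∨ b1 ≠ b2 ∨ c1 ≠ c2) :
    (1 : ℂ) - q ^ a1 * (q ^ a2)⁻¹ * t ^ b1 * (t ^ b2)⁻¹ * (T a ^ c1 * (T a ^ c2)⁻¹) ≠ 0 := by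
  have h := H ((a1:ℤ) - a2) ((b1:ℤ) - b2) (fun s => if s = a then (c1:ℤ) - c2 else 0)
    (by rw [abs_le]; omega) (by rw [abs_le]; omega)
    (by intro r; by_cases hr : r = a <;> simp [hr] <;> rw [abs_le] <;> omega)
    (by
      intro h0
      rw [Prod.mk_eq_zero, Prod.mk_eq_zero] at h0
      obtain ⟨e1, e2, e3⟩ := h0
      have := congrFun e3 a
      simp at this
      rcases hne with h | h | h <;> omega)
  have hp : (∏ r, T r ^ (if r = a then (c1:ℤ) - c2 else 0)) = T a ^ c1 * (T a ^ c2)⁻¹ := by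
    rw [Finset.prod_eq_single a (fun r _ hr => by simp [hr]) (by simp)]
    simp only [if_pos rfl]
    exact zpow_dif (T a) (hT a) c1 c2
  rw [hp, zpow_dif q hq, zpow_dif t ht] at h
  convert h using 2
  ring

lemma Hyp.facAR {A B : ℕ} {q t : ℂ} {T : Fin 4 → ℂ} (H : Hyp A B q t T)
    (hq : q ≠ 0) (ht : t ≠ 0) (hT : ∀ r, T r ≠ 0) (a r : Fin 4)
    (a1 a2 b1 b2 c1 c2 d1 d2 : ℕ) (ha1 : a1 ≤ A) (ha2 : a2 ≤ A) (hb1 : b1 ≤ B) (hb2 : b2 ≤ B)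
    (hc : c1 + d1 ≤ 2) (hd : c2 + d2 ≤ 2)
    (hne : a1 ≠ a2) :
    (1 : ℂ) - q ^ a1 * (q ^ a2)⁻¹ * t ^ b1 * (t ^ b2)⁻¹ *
      (T a ^ c1 * (T a ^ c2)⁻¹ * (T r ^ d1 * (T r ^ d2)⁻¹)) ≠ 0 := by
  have h := H ((a1:ℤ) - a2) ((b1:ℤ) - b2)
    (fun s => (if s = a then (c1:ℤ) - c2 else 0) + (if s = r then (d1:ℤ) - d2 else 0))
    (by rw [abs_le]; omega) (by rw [abs_le]; omega)
    (by
      intro s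
      by_cases h1 : s = a <;> by_cases h2 : s = r <;> simp [h1, h2] <;> rw [abs_le] <;> omega)
    (by
      intro h0
      rw [Prod.mk_eq_zero, Prod.mk_eq_zero] at h0
      obtain ⟨e1, _, _⟩ := h0
      omega)
  have hp : (∏ s, T s ^ ((if s = a then (c1:ℤ) - c2 else 0) + (if s = r then (d1:ℤ) - d2 else 0)))
      = T a ^ c1 * (T a ^ c2)⁻¹ * (T r ^ d1 * (T r ^ d2)⁻¹) := by
    have e1 : ∀ s : Fin 4, T s ^ ((if s = a then (c1:ℤ) - c2 else 0) + (if s = r then (d1:ℤ) - d2 else 0))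
        = T s ^ (if s = a then (c1:ℤ) - c2 else 0) * T s ^ (if s = r then (d1:ℤ) - d2 else 0) :=
      fun s => zpow_add₀ (hT s) _ _
    rw [Finset.prod_congr rfl (fun s _ => e1 s), Finset.prod_mul_distrib,
      Finset.prod_eq_single a (fun s _ hs => by simp [hs]) (by simp),
      Finset.prod_eq_single r (fun s _ hs => by simp [hs]) (by simp),
      if_pos rfl, if_pos rfl, zpow_dif (T a) (hT a), zpow_dif (T r) (hT r)]
  rw [hp, zpow_dif q hq, zpow_dif t ht] at h
  convert h using 2
  ring

lemma qPoch_ne_zero' (q x : ℂ) (m : ℕ) (h : ∀ i < m, (1:ℂ) - x * q ^ i ≠ 0) :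
    qPoch q x m ≠ 0 := by
  unfold qPoch
  rw [Finset.prod_ne_zero_iff]
  intro i hi
  exact h i (Finset.mem_range.mp hi)

lemma mem_pairsF {n : ℕ} (p : Fin n × Fin n) : p ∈ pairsF n ↔ p.1 < p.2 := by
  simp [pairsF]

lemma prod_erase_split {n : ℕ} (j : Fin n) (f : Fin n → ℂ) :
    ∏ k ∈ Finset.univ.erase j, f k
      = (∏ k ∈ Finset.univ.filter (· < j), f k) * ∏ k ∈ Finset.univ.filter (j < ·), f k := by
  rw [← Finset.prod_union]
  · apply Finset.prod_congr _ (fun _ _ => rfl)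
    ext k
    simp only [Finset.mem_erase, Finset.mem_univ, and_true, Finset.mem_union,
      Finset.mem_filter, true_and]
    constructor
    · intro h; exact lt_or_gt_of_ne h
    · rintro (h | h) <;> omega
  · rw [Finset.disjoint_left]
    intro k h1 h2
    simp only [Finset.mem_filter, Finset.mem_univ, true_and] at h1 h2
    exact absurd h2 (not_lt_of_gt h1)

lemma prod_pairs_split {n : ℕ} (j : Fin n) (f : Fin n × Fin n → ℂ) :
    ∏ p ∈ pairsF n, f p
      = (∏ p ∈ (pairsF n).filter (fun p => p.1 ≠ j ∧ p.2 ≠ j), f p)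
        * (∏ i ∈ Finset.univ.filter (· < j), f (i, j))
        * ∏ k ∈ Finset.univ.filter (j < ·), f (j, k) := by
  rw [← Finset.prod_filter_mul_prod_filter_not (pairsF n) (fun p => p.1 ≠ j ∧ p.2 ≠ j) f]
  rw [mul_assoc]
  congr 1
  have himg : (pairsF n).filter (fun p => ¬(p.1 ≠ j ∧ p.2 ≠ j))
      = ((Finset.univ.filter (· < j)).image (fun i => (i, j)))
        ∪ ((Finset.univ.filter (j < ·)).image (fun k => (j, k))) := by
    ext p
    simp only [Finset.mem_filter, mem_pairsF, Finset.mem_union, Finset.mem_image,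
      Finset.mem_filter, Finset.mem_univ, true_and, not_and, not_not]
    constructor
    · rintro ⟨hlt, h⟩
      by_cases h1 : p.1 = j
      · right; exact ⟨p.2, by rw [← h1]; exact hlt, by rw [← h1]⟩
      · have h2 := h h1
        left
        exact ⟨p.1, h2 ▸ hlt, by rw [← h2]⟩
    · rintro (⟨i, hi, rfl⟩ | ⟨k, hk, rfl⟩)
      · exact ⟨hi, fun _ => rfl⟩
      · exact ⟨hk, fun h => absurd rfl h⟩
  rw [himg, Finset.prod_union, Finset.prod_image, Finset.prod_image]
  · intro x _ y _ h; simpa using h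
  · intro x _ y _ h; simpa using h
  · rw [Finset.disjoint_left]
    rintro p hp1 hp2
    simp only [Finset.mem_image, Finset.mem_filter, Finset.mem_univ, true_and] at hp1 hp2
    obtain ⟨i, hi, rfl⟩ := hp1
    obtain ⟨k, hk, he⟩ := hp2
    rw [Prod.mk.injEq] at he
    exact absurd (he.1 ▸ hi) (lt_irrefl j)

lemma card_filter_gt {n : ℕ} (j : Fin n) :
    (Finset.univ.filter (j < ·)).card = n - 1 - (j : ℕ) := by
  rw [← Fin.card_Ioi j]
  congr 1
  ext k
  simp [Finset.mem_Ioi]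

end Aux2
section NZ

variable {A B : ℕ} {q t : ℂ} {T : Fin 4 → ℂ} {n : ℕ}

lemma tauv_ne_zero (ht : t ≠ 0) {ta : ℂ} (hta : ta ≠ 0) (i : Fin n) : tauv n t ta i ≠ 0 :=
  mul_ne_zero (pow_ne_zero _ ht) hta

lemma gridZ_ne_zero (hq : q ≠ 0) (ht : t ≠ 0) {ta : ℂ} (hta : ta ≠ 0) (ν : Fin n → ℕ)
    (k : Fin n) : gridZ n q t ta ν k ≠ 0 :=
  mul_ne_zero (tauv_ne_zero ht hta k) (pow_ne_zero _ hq)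

lemma CpN_ne_zero (H : Hyp A B q t T) (hq : q ≠ 0) (ht : t ≠ 0) (hT : ∀ r, T r ≠ 0) (a : Fin 4)
    (S : ℕ) (μ : Fin n → ℕ) (hS : ∀ i, μ i ≤ S) (hA : 2*S+2 ≤ A) (hB : 2*n+2 ≤ B) :
    CpN n q t (T a) μ ≠ 0 := by
  unfold CpN
  apply mul_ne_zero
  · rw [Finset.prod_ne_zero_iff]
    intro p hp
    have hlt : (p.1 : ℕ) < (p.2 : ℕ) := (mem_pairsF p).mp hp
    have h1 := hS p.1
    have h2 := hS p.2
    have h3 := p.1.isLt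
    have h4 := p.2.isLt
    apply mul_ne_zero
    · apply qPoch_ne_zero'
      intro i hi
      rw [show tauv n t (T a) p.1 * tauv n t (T a) p.2 * q ^ i
          = q ^ i * (q ^ 0)⁻¹ * t ^ ((n - 1 - (p.1:ℕ)) + (n - 1 - (p.2:ℕ))) * (t ^ 0)⁻¹
            * (T a ^ 2 * (T a ^ 0)⁻¹) from by unfold tauv; ring]
      exact H.facA hq ht hT a _ _ _ _ _ _ (by omega) (by omega) (by omega) (by omega)
        (by omega) (by omega) (by right; right; omega)
    · apply qPoch_ne_zero'
      intro i hi
      rw [show tauv n t (T a) p.1 * (tauv n t (T a) p.2)⁻¹ * q ^ i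
          = q ^ i * (q ^ 0)⁻¹ * t ^ (n - 1 - (p.1:ℕ)) * (t ^ (n - 1 - (p.2:ℕ)))⁻¹
            * (T a ^ 1 * (T a ^ 1)⁻¹) from by unfold tauv; ring]
      exact H.facA hq ht hT a _ _ _ _ _ _ (by omega) (by omega) (by omega) (by omega)
        (by omega) (by omega) (by right; left; omega)
  · rw [Finset.prod_ne_zero_iff]
    intro i _
    have h1 := hS i
    have h3 := i.isLt
    apply qPoch_ne_zero'
    intro k hk
    rw [show tauv n t (T a) i ^ 2 * q ^ k
        = q ^ k * (q ^ 0)⁻¹ * t ^ ((n - 1 - (i:ℕ)) + (n - 1 - (i:ℕ))) * (t ^ 0)⁻¹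
          * (T a ^ 2 * (T a ^ 0)⁻¹) from by unfold tauv; ring]
    exact H.facA hq ht hT a _ _ _ _ _ _ (by omega) (by omega) (by omega) (by omega)
      (by omega) (by omega) (by right; right; omega)

lemma CmN_ne_zero (H : Hyp A B q t T) (hq : q ≠ 0) (ht : t ≠ 0) (hT : ∀ r, T r ≠ 0) (a : Fin 4)
    (S : ℕ) (μ : Fin n → ℕ) (hS : ∀ i, μ i ≤ S) (hA : 2*S+2 ≤ A) (hB : 2*n+2 ≤ B) :
    CmN n q t (T a) T μ ≠ 0 := by
  unfold CmN
  apply mul_ne_zero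
  · rw [Finset.prod_ne_zero_iff]
    intro p hp
    have hlt : (p.1 : ℕ) < (p.2 : ℕ) := (mem_pairsF p).mp hp
    have h1 := hS p.1
    have h2 := hS p.2
    have h3 := p.1.isLt
    have h4 := p.2.isLt
    apply mul_ne_zero
    · apply qPoch_ne_zero'
      intro i hi
      rw [show t⁻¹ * q * tauv n t (T a) p.1 * tauv n t (T a) p.2 * q ^ i
          = q ^ (i+1) * (q ^ 0)⁻¹ * t ^ ((n - 1 - (p.1:ℕ)) + (n - 1 - (p.2:ℕ))) * (t ^ 1)⁻¹
            * (T a ^ 2 * (T a ^ 0)⁻¹) from by unfold tauv; ring]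
      exact H.facA hq ht hT a _ _ _ _ _ _ (by omega) (by omega) (by omega) (by omega)
        (by omega) (by omega) (by right; right; omega)
    · apply qPoch_ne_zero'
      intro i hi
      rw [show t⁻¹ * q * tauv n t (T a) p.1 * (tauv n t (T a) p.2)⁻¹ * q ^ i
          = q ^ (i+1) * (q ^ 0)⁻¹ * t ^ (n - 1 - (p.1:ℕ)) * (t ^ ((n - 1 - (p.2:ℕ)) + 1))⁻¹
            * (T a ^ 1 * (T a ^ 1)⁻¹) from by unfold tauv; ring]
      exact H.facA hq ht hT a _ _ _ _ _ _ (by omega) (by omega) (by omega) (by omega)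
        (by omega) (by omega) (by left; omega)
  · rw [Finset.prod_ne_zero_iff]
    intro i _
    rw [Finset.prod_ne_zero_iff]
    intro r _
    have h1 := hS i
    have h3 := i.isLt
    apply qPoch_ne_zero'
    intro k hk
    rw [show (T r)⁻¹ * q * tauv n t (T a) i * q ^ k
        = q ^ (k+1) * (q ^ 0)⁻¹ * t ^ (n - 1 - (i:ℕ)) * (t ^ 0)⁻¹
          * (T a ^ 1 * (T a ^ 0)⁻¹ * (T r ^ 0 * (T r ^ 1)⁻¹)) from by unfold tauv; ring]
    exact H.facAR hq ht hT a r _ _ _ _ _ _ _ _ (by omega) (by omega) (by omega) (by omega)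
      (by omega) (by omega) (by omega)

lemma c0sq_ne_zero (hq : q ≠ 0) (ht : t ≠ 0) (hT : ∀ r, T r ≠ 0) (μ : Fin n → ℕ) :
    c0sq q t T μ ≠ 0 := by
  unfold c0sq
  rw [Finset.prod_ne_zero_iff]
  intro i _
  apply pow_ne_zero
  apply mul_ne_zero (mul_ne_zero (pow_ne_zero _ (pow_ne_zero _ ht)) _) (inv_ne_zero hq)
  exact Finset.prod_ne_zero_iff.mpr fun r _ => hT r

lemma VDen_one_ne_zero (H : Hyp A B q t T) (hq : q ≠ 0) (ht : t ≠ 0) (hT : ∀ r, T r ≠ 0)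
    (a : Fin 4) (S : ℕ) (μ : Fin n → ℕ) (hS : ∀ i, μ i ≤ S) (hA : 2*S+2 ≤ A) (hB : 2*n+2 ≤ B)
    (j : Fin n) :
    VDen q 1 j (gridZ n q t (T a) μ) ≠ 0 := by
  unfold VDen
  have hj := j.isLt
  have hj1 := hS j
  apply mul_ne_zero
  · apply mul_ne_zero
    · rw [show gridZ n q t (T a) μ j ^ (2 * 1 : ℤ)
          = q ^ (μ j + μ j) * (q ^ 0)⁻¹ * t ^ ((n - 1 - (j:ℕ)) + (n - 1 - (j:ℕ))) * (t ^ 0)⁻¹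
            * (T a ^ 2 * (T a ^ 0)⁻¹) from by
        rw [show (2 * 1 : ℤ) = ((2:ℕ):ℤ) from rfl, zpow_natCast]
        unfold gridZ tauv; ring]
      rw [show (1 : ℂ) - q ^ (μ j + μ j) * (q ^ 0)⁻¹ * t ^ ((n-1-(j:ℕ)) + (n-1-(j:ℕ))) * (t ^ 0)⁻¹
            * (T a ^ 2 * (T a ^ 0)⁻¹) = 1 - q ^ (μ j + μ j) * (q ^ 0)⁻¹ *
            t ^ ((n-1-(j:ℕ)) + (n-1-(j:ℕ))) * (t ^ 0)⁻¹ * (T a ^ 2 * (T a ^ 0)⁻¹) from rfl]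
      exact H.facA hq ht hT a _ _ _ _ _ _ (by omega) (by omega) (by omega) (by omega)
        (by omega) (by omega) (by right; right; omega)
    · rw [show q * gridZ n q t (T a) μ j ^ (2 * 1 : ℤ)
          = q ^ (μ j + μ j + 1) * (q ^ 0)⁻¹ * t ^ ((n - 1 - (j:ℕ)) + (n - 1 - (j:ℕ))) * (t ^ 0)⁻¹
            * (T a ^ 2 * (T a ^ 0)⁻¹) from by
        rw [show (2 * 1 : ℤ) = ((2:ℕ):ℤ) from rfl, zpow_natCast]
        unfold gridZ tauv; ring]
      exact H.facA hq ht hT a _ _ _ _ _ _ (by omega) (by omega) (by omega) (by omega)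
        (by omega) (by omega) (by right; right; omega)
  · rw [Finset.prod_ne_zero_iff]
    intro k hk
    have hkj : (k:ℕ) ≠ (j:ℕ) := fun h => (Finset.mem_erase.mp hk).1 (Fin.ext h)
    have hk1 := hS k
    have hk2 := k.isLt
    apply mul_ne_zero
    · rw [show gridZ n q t (T a) μ j ^ (1:ℤ) * gridZ n q t (T a) μ k
          = q ^ (μ j + μ k) * (q ^ 0)⁻¹ * t ^ ((n - 1 - (j:ℕ)) + (n - 1 - (k:ℕ))) * (t ^ 0)⁻¹
            * (T a ^ 2 * (T a ^ 0)⁻¹) from by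
        rw [zpow_one]; unfold gridZ tauv; ring]
      exact H.facA hq ht hT a _ _ _ _ _ _ (by omega) (by omega) (by omega) (by omega)
        (by omega) (by omega) (by right; right; omega)
    · rw [show gridZ n q t (T a) μ j ^ (1:ℤ) * (gridZ n q t (T a) μ k)⁻¹
          = q ^ (μ j) * (q ^ (μ k))⁻¹ * t ^ (n - 1 - (j:ℕ)) * (t ^ (n - 1 - (k:ℕ)))⁻¹
            * (T a ^ 1 * (T a ^ 1)⁻¹) from by
        rw [zpow_one]; unfold gridZ tauv; ring]
      exact H.facA hq ht hT a _ _ _ _ _ _ (by omega) (by omega) (by omega) (by omega)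
        (by omega) (by omega) (by right; left; omega)

lemma VDen_neg_one_ne_zero (H : Hyp A B q t T) (hq : q ≠ 0) (ht : t ≠ 0) (hT : ∀ r, T r ≠ 0)
    (a : Fin 4) (S : ℕ) (μ : Fin n → ℕ) (hS : ∀ i, μ i ≤ S) (hA : 2*S+2 ≤ A) (hB : 2*n+2 ≤ B)
    (j : Fin n) :
    VDen q (-1) j (gridZ n q t (T a) μ) ≠ 0 := by
  unfold VDen
  have hj := j.isLt
  have hj1 := hS j
  apply mul_ne_zero
  · apply mul_ne_zero
    · rw [show gridZ n q t (T a) μ j ^ (2 * -1 : ℤ)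
          = q ^ (0:ℕ) * (q ^ (μ j + μ j))⁻¹ * t ^ (0:ℕ) * (t ^ ((n - 1 - (j:ℕ)) + (n - 1 - (j:ℕ))))⁻¹
            * (T a ^ 0 * (T a ^ 2)⁻¹) from by
        rw [show (2 * -1 : ℤ) = -((2:ℕ):ℤ) from rfl, zpow_neg, zpow_natCast]
        unfold gridZ tauv
        ring]
      exact H.facA hq ht hT a _ _ _ _ _ _ (by omega) (by omega) (by omega) (by omega)
        (by omega) (by omega) (by right; right; omega)
    · rw [show q * gridZ n q t (T a) μ j ^ (2 * -1 : ℤ)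
          = q ^ (1:ℕ) * (q ^ (μ j + μ j))⁻¹ * t ^ (0:ℕ) * (t ^ ((n - 1 - (j:ℕ)) + (n - 1 - (j:ℕ))))⁻¹
            * (T a ^ 0 * (T a ^ 2)⁻¹) from by
        rw [show (2 * -1 : ℤ) = -((2:ℕ):ℤ) from rfl, zpow_neg, zpow_natCast]
        unfold gridZ tauv
        ring]
      exact H.facA hq ht hT a _ _ _ _ _ _ (by omega) (by omega) (by omega) (by omega)
        (by omega) (by omega) (by right; right; omega)
  · rw [Finset.prod_ne_zero_iff]
    intro k hk
    have hkj : (k:ℕ) ≠ (j:ℕ) := fun h => (Finset.mem_erase.mp hk).1 (Fin.ext h)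
    have hk1 := hS k
    have hk2 := k.isLt
    apply mul_ne_zero
    · rw [show gridZ n q t (T a) μ j ^ (-1:ℤ) * gridZ n q t (T a) μ k
          = q ^ (μ k) * (q ^ (μ j))⁻¹ * t ^ (n - 1 - (k:ℕ)) * (t ^ (n - 1 - (j:ℕ)))⁻¹
            * (T a ^ 1 * (T a ^ 1)⁻¹) from by
        rw [zpow_neg_one]; unfold gridZ tauv; ring]
      exact H.facA hq ht hT a _ _ _ _ _ _ (by omega) (by omega) (by omega) (by omega)
        (by omega) (by omega) (by right; left; omega)
    · rw [show gridZ n q t (T a) μ j ^ (-1:ℤ) * (gridZ n q t (T a) μ k)⁻¹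
          = q ^ (0:ℕ) * (q ^ (μ j + μ k))⁻¹ * t ^ (0:ℕ) * (t ^ ((n - 1 - (j:ℕ)) + (n - 1 - (k:ℕ))))⁻¹
            * (T a ^ 0 * (T a ^ 2)⁻¹) from by
        rw [zpow_neg_one]; unfold gridZ tauv; ring]
      exact H.facA hq ht hT a _ _ _ _ _ _ (by omega) (by omega) (by omega) (by omega)
        (by omega) (by omega) (by right; right; omega)

end NZ
section Shift

lemma qPoch_succ (q x : ℂ) (m : ℕ) : qPoch q x (m + 1) = qPoch q x m * (1 - x * q ^ m) :=
  Finset.prod_range_succ _ _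

lemma pow_sub_inv {q : ℂ} (hq : q ≠ 0) {m1 m2 : ℕ} (h : m2 ≤ m1) :
    q ^ (m1 - m2) = q ^ m1 * (q ^ m2)⁻¹ := by
  rw [pow_sub₀ q hq h]

lemma pairprod_shift (n : ℕ) (q t ta c : ℂ) (ν ν' : Fin n → ℕ) (j : Fin n)
    (hq : q ≠ 0)
    (hshift : ∀ i, ν' i = ν i + if i = j then 1 else 0)
    (hν : isDominant ν) (hν' : isDominant ν') :
    (∏ p ∈ pairsF n, qPoch q (c * tauv n t ta p.1 * tauv n t ta p.2) (ν' p.1 + ν' p.2) *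
        qPoch q (c * tauv n t ta p.1 * (tauv n t ta p.2)⁻¹) (ν' p.1 - ν' p.2))
      * ∏ i ∈ Finset.univ.filter (· < j), (1 - c * gridZ n q t ta ν i * (q * gridZ n q t ta ν j)⁻¹)
    = (∏ p ∈ pairsF n, qPoch q (c * tauv n t ta p.1 * tauv n t ta p.2) (ν p.1 + ν p.2) *
        qPoch q (c * tauv n t ta p.1 * (tauv n t ta p.2)⁻¹) (ν p.1 - ν p.2))
      * ((∏ i ∈ Finset.univ.filter (· < j), (1 - c * gridZ n q t ta ν i * gridZ n q t ta ν j))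
        * ∏ k ∈ Finset.univ.filter (j < ·),
            ((1 - c * gridZ n q t ta ν j * gridZ n q t ta ν k)
              * (1 - c * gridZ n q t ta ν j * (gridZ n q t ta ν k)⁻¹))) := by
  have hj' : ν' j = ν j + 1 := by have := hshift j; simp at this; omega
  have hoth : ∀ i : Fin n, i ≠ j → ν' i = ν i := by
    intro i hi; have := hshift i; simp [hi] at this; omega
  rw [prod_pairs_split j, prod_pairs_split j
    (fun p => qPoch q (c * tauv n t ta p.1 * tauv n t ta p.2) (ν p.1 + ν p.2) *
        qPoch q (c * tauv n t ta p.1 * (tauv n t ta p.2)⁻¹) (ν p.1 - ν p.2))]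
  have hnei : (∏ p ∈ (pairsF n).filter (fun p => p.1 ≠ j ∧ p.2 ≠ j),
        qPoch q (c * tauv n t ta p.1 * tauv n t ta p.2) (ν' p.1 + ν' p.2) *
          qPoch q (c * tauv n t ta p.1 * (tauv n t ta p.2)⁻¹) (ν' p.1 - ν' p.2))
      = ∏ p ∈ (pairsF n).filter (fun p => p.1 ≠ j ∧ p.2 ≠ j),
        qPoch q (c * tauv n t ta p.1 * tauv n t ta p.2) (ν p.1 + ν p.2) *
          qPoch q (c * tauv n t ta p.1 * (tauv n t ta p.2)⁻¹) (ν p.1 - ν p.2) := by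
    apply Finset.prod_congr rfl
    intro p hp
    obtain ⟨h1, h2⟩ := (Finset.mem_filter.mp hp).2
    rw [hoth p.1 h1, hoth p.2 h2]
  have hFb : (∏ i ∈ Finset.univ.filter (· < j),
        qPoch q (c * tauv n t ta i * tauv n t ta j) (ν' i + ν' j) *
          qPoch q (c * tauv n t ta i * (tauv n t ta j)⁻¹) (ν' i - ν' j))
          * (∏ i ∈ Finset.univ.filter (· < j), (1 - c * gridZ n q t ta ν i * (q * gridZ n q t ta ν j)⁻¹))
      = (∏ i ∈ Finset.univ.filter (· < j),
        qPoch q (c * tauv n t ta i * tauv n t ta j) (ν i + ν j) *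
          qPoch q (c * tauv n t ta i * (tauv n t ta j)⁻¹) (ν i - ν j))
          * (∏ i ∈ Finset.univ.filter (· < j), (1 - c * gridZ n q t ta ν i * gridZ n q t ta ν j)) := by
    rw [← Finset.prod_mul_distrib, ← Finset.prod_mul_distrib]
    apply Finset.prod_congr rfl
    intro i hi
    have hij : i < j := by simpa using hi
    have hii : ν' i = ν i := hoth i (Fin.ne_of_lt hij)
    have hdom : ν j + 1 ≤ ν i := by
      have := hν' i j (le_of_lt hij); omega
    have e1 : ν' i + ν' j = (ν i + ν j) + 1 := by omega
    have e2 : ν i - ν j = (ν' i - ν' j) + 1 := by omega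
    rw [e1, e2]
    simp only [qPoch_succ]
    have e3 : q ^ (ν' i - ν' j) = q ^ (ν i) * (q ^ (ν j) * q)⁻¹ := by
      rw [show ν' i - ν' j = ν i - (ν j + 1) by omega, pow_sub_inv hq (by omega), pow_succ]
    rw [e3]
    unfold gridZ tauv
    ring
  have hFa : (∏ k ∈ Finset.univ.filter (j < ·),
        qPoch q (c * tauv n t ta j * tauv n t ta k) (ν' j + ν' k) *
          qPoch q (c * tauv n t ta j * (tauv n t ta k)⁻¹) (ν' j - ν' k))
      = (∏ k ∈ Finset.univ.filter (j < ·),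
        qPoch q (c * tauv n t ta j * tauv n t ta k) (ν j + ν k) *
          qPoch q (c * tauv n t ta j * (tauv n t ta k)⁻¹) (ν j - ν k))
          * (∏ k ∈ Finset.univ.filter (j < ·),
            ((1 - c * gridZ n q t ta ν j * gridZ n q t ta ν k)
            * (1 - c * gridZ n q t ta ν j * (gridZ n q t ta ν k)⁻¹))) := by
    rw [← Finset.prod_mul_distrib]
    apply Finset.prod_congr rfl
    intro k hk
    have hjk : j < k := by simpa using hk
    have hkk : ν' k = ν k := hoth k (Fin.ne_of_gt hjk)
    have hdom : ν k ≤ ν j := hν j k (le_of_lt hjk)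
    have e1 : ν' j + ν' k = (ν j + ν k) + 1 := by omega
    have e2 : ν' j - ν' k = (ν j - ν k) + 1 := by omega
    rw [e1, e2]
    simp only [qPoch_succ]
    have e3 : q ^ (ν j - ν k) = q ^ (ν j) * (q ^ (ν k))⁻¹ := pow_sub_inv hq hdom
    rw [e3]
    unfold gridZ tauv
    ring
  rw [hnei]
  dsimp only
  linear_combination ((∏ p ∈ (pairsF n).filter (fun p => p.1 ≠ j ∧ p.2 ≠ j),
        qPoch q (c * tauv n t ta p.1 * tauv n t ta p.2) (ν p.1 + ν p.2) *
          qPoch q (c * tauv n t ta p.1 * (tauv n t ta p.2)⁻¹) (ν p.1 - ν p.2))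
      * (∏ k ∈ Finset.univ.filter (j < ·),
          qPoch q (c * tauv n t ta j * tauv n t ta k) (ν' j + ν' k) *
            qPoch q (c * tauv n t ta j * (tauv n t ta k)⁻¹) (ν' j - ν' k))) * hFb
    + ((∏ p ∈ (pairsF n).filter (fun p => p.1 ≠ j ∧ p.2 ≠ j),
        qPoch q (c * tauv n t ta p.1 * tauv n t ta p.2) (ν p.1 + ν p.2) *
          qPoch q (c * tauv n t ta p.1 * (tauv n t ta p.2)⁻¹) (ν p.1 - ν p.2))
      * (∏ i ∈ Finset.univ.filter (· < j),
          qPoch q (c * tauv n t ta i * tauv n t ta j) (ν i + ν j) *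
            qPoch q (c * tauv n t ta i * (tauv n t ta j)⁻¹) (ν i - ν j))
      * (∏ i ∈ Finset.univ.filter (· < j), (1 - c * gridZ n q t ta ν i * gridZ n q t ta ν j))) * hFa

end Shift
section Shift2

lemma diagsq_shift (n : ℕ) (q t ta c : ℂ) (ν ν' : Fin n → ℕ) (j : Fin n)
    (hshift : ∀ i, ν' i = ν i + if i = j then 1 else 0) :
    (∏ i, qPoch q (c * tauv n t ta i ^ 2) (2 * ν' i))
      = (∏ i, qPoch q (c * tauv n t ta i ^ 2) (2 * ν i))
        * ((1 - c * (gridZ n q t ta ν j * gridZ n q t ta ν j))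
          * (1 - c * q * (gridZ n q t ta ν j * gridZ n q t ta ν j))) := by
  have hj' : ν' j = ν j + 1 := by have := hshift j; simp at this; omega
  have hoth : ∀ i : Fin n, i ≠ j → ν' i = ν i := by
    intro i hi; have := hshift i; simp [hi] at this; omega
  rw [← Finset.mul_prod_erase _ _ (Finset.mem_univ j),
    ← Finset.mul_prod_erase _ (fun i => qPoch q (c * tauv n t ta i ^ 2) (2 * ν i))
      (Finset.mem_univ j)]
  have he : (∏ i ∈ Finset.univ.erase j, qPoch q (c * tauv n t ta i ^ 2) (2 * ν' i))
      = ∏ i ∈ Finset.univ.erase j, qPoch q (c * tauv n t ta i ^ 2) (2 * ν i) :=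
    Finset.prod_congr rfl fun i hi => by rw [hoth i (Finset.mem_erase.mp hi).1]
  rw [he, show 2 * ν' j = (2 * ν j + 1) + 1 from by omega, qPoch_succ, qPoch_succ]
  unfold gridZ tauv
  ring

lemma singleT_shift (n : ℕ) (q t ta : ℂ) (T : Fin 4 → ℂ) (ν ν' : Fin n → ℕ) (j : Fin n)
    (hshift : ∀ i, ν' i = ν i + if i = j then 1 else 0) :
    (∏ i, ∏ r, qPoch q (T r * tauv n t ta i) (ν' i))
      = (∏ i, ∏ r, qPoch q (T r * tauv n t ta i) (ν i))
        * ∏ r, (1 - T r * gridZ n q t ta ν j) := by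
  have hj' : ν' j = ν j + 1 := by have := hshift j; simp at this; omega
  have hoth : ∀ i : Fin n, i ≠ j → ν' i = ν i := by
    intro i hi; have := hshift i; simp [hi] at this; omega
  rw [← Finset.mul_prod_erase _ _ (Finset.mem_univ j),
    ← Finset.mul_prod_erase _ (fun i => ∏ r, qPoch q (T r * tauv n t ta i) (ν i))
      (Finset.mem_univ j)]
  have he : (∏ i ∈ Finset.univ.erase j, ∏ r, qPoch q (T r * tauv n t ta i) (ν' i))
      = ∏ i ∈ Finset.univ.erase j, ∏ r, qPoch q (T r * tauv n t ta i) (ν i) :=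
    Finset.prod_congr rfl fun i hi => by rw [hoth i (Finset.mem_erase.mp hi).1]
  rw [he, hj']
  have hjp : (∏ r, qPoch q (T r * tauv n t ta j) (ν j + 1))
      = (∏ r, qPoch q (T r * tauv n t ta j) (ν j)) * ∏ r, (1 - T r * gridZ n q t ta ν j) := by
    rw [← Finset.prod_mul_distrib]
    apply Finset.prod_congr rfl
    intro r _
    rw [qPoch_succ]
    unfold gridZ tauv
    ring
  rw [hjp]
  ring

lemma singleTinv_shift (n : ℕ) (q t ta : ℂ) (T : Fin 4 → ℂ) (ν ν' : Fin n → ℕ) (j : Fin n)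
    (hshift : ∀ i, ν' i = ν i + if i = j then 1 else 0) :
    (∏ i, ∏ r, qPoch q ((T r)⁻¹ * q * tauv n t ta i) (ν' i))
      = (∏ i, ∏ r, qPoch q ((T r)⁻¹ * q * tauv n t ta i) (ν i))
        * ∏ r, (1 - (T r)⁻¹ * q * gridZ n q t ta ν j) := by
  have hj' : ν' j = ν j + 1 := by have := hshift j; simp at this; omega
  have hoth : ∀ i : Fin n, i ≠ j → ν' i = ν i := by
    intro i hi; have := hshift i; simp [hi] at this; omega
  rw [← Finset.mul_prod_erase _ _ (Finset.mem_univ j),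
    ← Finset.mul_prod_erase _ (fun i => ∏ r, qPoch q ((T r)⁻¹ * q * tauv n t ta i) (ν i))
      (Finset.mem_univ j)]
  have he : (∏ i ∈ Finset.univ.erase j, ∏ r, qPoch q ((T r)⁻¹ * q * tauv n t ta i) (ν' i))
      = ∏ i ∈ Finset.univ.erase j, ∏ r, qPoch q ((T r)⁻¹ * q * tauv n t ta i) (ν i) :=
    Finset.prod_congr rfl fun i hi => by rw [hoth i (Finset.mem_erase.mp hi).1]
  rw [he, hj']
  have hjp : (∏ r, qPoch q ((T r)⁻¹ * q * tauv n t ta j) (ν j + 1))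
      = (∏ r, qPoch q ((T r)⁻¹ * q * tauv n t ta j) (ν j))
        * ∏ r, (1 - (T r)⁻¹ * q * gridZ n q t ta ν j) := by
    rw [← Finset.prod_mul_distrib]
    apply Finset.prod_congr rfl
    intro r _
    rw [qPoch_succ]
    unfold gridZ tauv
    ring
  rw [hjp]
  ring

lemma c0sq_shift (n : ℕ) (q t : ℂ) (T : Fin 4 → ℂ) (ν ν' : Fin n → ℕ) (j : Fin n)
    (hshift : ∀ i, ν' i = ν i + if i = j then 1 else 0) :
    c0sq q t T ν' = c0sq q t T ν * ((t ^ (n - 1 - (j:ℕ))) ^ 2 * (∏ r, T r) * q⁻¹) := by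
  have hj' : ν' j = ν j + 1 := by have := hshift j; simp at this; omega
  have hoth : ∀ i : Fin n, i ≠ j → ν' i = ν i := by
    intro i hi; have := hshift i; simp [hi] at this; omega
  unfold c0sq
  rw [← Finset.mul_prod_erase _ _ (Finset.mem_univ j),
    ← Finset.mul_prod_erase _ (fun i : Fin n => ((t ^ (n - 1 - (i:ℕ))) ^ 2 * (∏ r, T r) * q⁻¹) ^ ν i)
      (Finset.mem_univ j)]
  have he : (∏ i ∈ Finset.univ.erase j, ((t ^ (n - 1 - (i:ℕ))) ^ 2 * (∏ r, T r) * q⁻¹) ^ ν' i)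
      = ∏ i ∈ Finset.univ.erase j, ((t ^ (n - 1 - (i:ℕ))) ^ 2 * (∏ r, T r) * q⁻¹) ^ ν i :=
    Finset.prod_congr rfl fun i hi => by rw [hoth i (Finset.mem_erase.mp hi).1]
  rw [he, hj', pow_succ]
  ring

lemma CpD_shift (n : ℕ) (q t ta : ℂ) (T : Fin 4 → ℂ) (ν ν' : Fin n → ℕ) (j : Fin n)
    (hq : q ≠ 0)
    (hshift : ∀ i, ν' i = ν i + if i = j then 1 else 0)
    (hν : isDominant ν) (hν' : isDominant ν') :
    CpD n q t ta T ν'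
        * ∏ i ∈ Finset.univ.filter (· < j), (1 - t * gridZ n q t ta ν i * (q * gridZ n q t ta ν j)⁻¹)
      = CpD n q t ta T ν
        * ((∏ r, (1 - T r * gridZ n q t ta ν j))
          * ((∏ i ∈ Finset.univ.filter (· < j), (1 - t * gridZ n q t ta ν i * gridZ n q t ta ν j))
            * ∏ k ∈ Finset.univ.filter (j < ·),
                ((1 - t * gridZ n q t ta ν j * gridZ n q t ta ν k)
                  * (1 - t * gridZ n q t ta ν j * (gridZ n q t ta ν k)⁻¹)))) := by
  have hP := pairprod_shift n q t ta t ν ν' j hq hshift hν hν'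
  have hS := singleT_shift n q t ta T ν ν' j hshift
  unfold CpD
  linear_combination (∏ i, ∏ r, qPoch q (T r * tauv n t ta i) (ν' i)) * hP
    + ((∏ p ∈ pairsF n, qPoch q (t * tauv n t ta p.1 * tauv n t ta p.2) (ν p.1 + ν p.2) *
        qPoch q (t * tauv n t ta p.1 * (tauv n t ta p.2)⁻¹) (ν p.1 - ν p.2))
      * ((∏ i ∈ Finset.univ.filter (· < j), (1 - t * gridZ n q t ta ν i * gridZ n q t ta ν j))
        * ∏ k ∈ Finset.univ.filter (j < ·),
            ((1 - t * gridZ n q t ta ν j * gridZ n q t ta ν k)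
              * (1 - t * gridZ n q t ta ν j * (gridZ n q t ta ν k)⁻¹)))) * hS

lemma CmD_shift (n : ℕ) (q t ta : ℂ) (ν ν' : Fin n → ℕ) (j : Fin n)
    (hq : q ≠ 0)
    (hshift : ∀ i, ν' i = ν i + if i = j then 1 else 0)
    (hν : isDominant ν) (hν' : isDominant ν') :
    CmD n q t ta ν'
        * ∏ i ∈ Finset.univ.filter (· < j), (1 - q * gridZ n q t ta ν i * (q * gridZ n q t ta ν j)⁻¹)
      = CmD n q t ta ν
        * (((1 - q * (gridZ n q t ta ν j * gridZ n q t ta ν j))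
            * (1 - q * q * (gridZ n q t ta ν j * gridZ n q t ta ν j)))
          * ((∏ i ∈ Finset.univ.filter (· < j), (1 - q * gridZ n q t ta ν i * gridZ n q t ta ν j))
            * ∏ k ∈ Finset.univ.filter (j < ·),
                ((1 - q * gridZ n q t ta ν j * gridZ n q t ta ν k)
                  * (1 - q * gridZ n q t ta ν j * (gridZ n q t ta ν k)⁻¹)))) := by
  have hP := pairprod_shift n q t ta q ν ν' j hq hshift hν hν'
  have hD := diagsq_shift n q t ta q ν ν' j hshift
  unfold CmD
  linear_combination (∏ i, qPoch q (q * tauv n t ta i ^ 2) (2 * ν' i)) * hP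
    + ((∏ p ∈ pairsF n, qPoch q (q * tauv n t ta p.1 * tauv n t ta p.2) (ν p.1 + ν p.2) *
        qPoch q (q * tauv n t ta p.1 * (tauv n t ta p.2)⁻¹) (ν p.1 - ν p.2))
      * ((∏ i ∈ Finset.univ.filter (· < j), (1 - q * gridZ n q t ta ν i * gridZ n q t ta ν j))
        * ∏ k ∈ Finset.univ.filter (j < ·),
            ((1 - q * gridZ n q t ta ν j * gridZ n q t ta ν k)
              * (1 - q * gridZ n q t ta ν j * (gridZ n q t ta ν k)⁻¹)))) * hD

lemma CpN_shift (n : ℕ) (q t ta : ℂ) (ν ν' : Fin n → ℕ) (j : Fin n)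
    (hq : q ≠ 0)
    (hshift : ∀ i, ν' i = ν i + if i = j then 1 else 0)
    (hν : isDominant ν) (hν' : isDominant ν') :
    CpN n q t ta ν'
        * ∏ i ∈ Finset.univ.filter (· < j), (1 - gridZ n q t ta ν i * (q * gridZ n q t ta ν j)⁻¹)
      = CpN n q t ta ν
        * (((1 - gridZ n q t ta ν j * gridZ n q t ta ν j)
            * (1 - q * (gridZ n q t ta ν j * gridZ n q t ta ν j)))
          * ((∏ i ∈ Finset.univ.filter (· < j), (1 - gridZ n q t ta ν i * gridZ n q t ta ν j))
            * ∏ k ∈ Finset.univ.filter (j < ·),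
                ((1 - gridZ n q t ta ν j * gridZ n q t ta ν k)
                  * (1 - gridZ n q t ta ν j * (gridZ n q t ta ν k)⁻¹)))) := by
  have hP := pairprod_shift n q t ta 1 ν ν' j hq hshift hν hν'
  have hD := diagsq_shift n q t ta 1 ν ν' j hshift
  simp only [one_mul] at hP hD
  unfold CpN
  linear_combination (∏ i, qPoch q (tauv n t ta i ^ 2) (2 * ν' i)) * hP
    + ((∏ p ∈ pairsF n, qPoch q (tauv n t ta p.1 * tauv n t ta p.2) (ν p.1 + ν p.2) *
        qPoch q (tauv n t ta p.1 * (tauv n t ta p.2)⁻¹) (ν p.1 - ν p.2))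
      * ((∏ i ∈ Finset.univ.filter (· < j), (1 - gridZ n q t ta ν i * gridZ n q t ta ν j))
        * ∏ k ∈ Finset.univ.filter (j < ·),
            ((1 - gridZ n q t ta ν j * gridZ n q t ta ν k)
              * (1 - gridZ n q t ta ν j * (gridZ n q t ta ν k)⁻¹)))) * hD

lemma CmN_shift (n : ℕ) (q t ta : ℂ) (T : Fin 4 → ℂ) (ν ν' : Fin n → ℕ) (j : Fin n)
    (hq : q ≠ 0)
    (hshift : ∀ i, ν' i = ν i + if i = j then 1 else 0)
    (hν : isDominant ν) (hν' : isDominant ν') :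
    CmN n q t ta T ν'
        * ∏ i ∈ Finset.univ.filter (· < j),
            (1 - t⁻¹ * q * gridZ n q t ta ν i * (q * gridZ n q t ta ν j)⁻¹)
      = CmN n q t ta T ν
        * ((∏ r, (1 - (T r)⁻¹ * q * gridZ n q t ta ν j))
          * ((∏ i ∈ Finset.univ.filter (· < j),
              (1 - t⁻¹ * q * gridZ n q t ta ν i * gridZ n q t ta ν j))
            * ∏ k ∈ Finset.univ.filter (j < ·),
                ((1 - t⁻¹ * q * gridZ n q t ta ν j * gridZ n q t ta ν k)
                  * (1 - t⁻¹ * q * gridZ n q t ta ν j * (gridZ n q t ta ν k)⁻¹)))) := by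
  have hP := pairprod_shift n q t ta (t⁻¹ * q) ν ν' j hq hshift hν hν'
  have hS := singleTinv_shift n q t ta T ν ν' j hshift
  unfold CmN
  linear_combination (∏ i, ∏ r, qPoch q ((T r)⁻¹ * q * tauv n t ta i) (ν' i)) * hP
    + ((∏ p ∈ pairsF n, qPoch q (t⁻¹ * q * tauv n t ta p.1 * tauv n t ta p.2) (ν p.1 + ν p.2) *
        qPoch q (t⁻¹ * q * tauv n t ta p.1 * (tauv n t ta p.2)⁻¹) (ν p.1 - ν p.2))
      * ((∏ i ∈ Finset.univ.filter (· < j),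
          (1 - t⁻¹ * q * gridZ n q t ta ν i * gridZ n q t ta ν j))
        * ∏ k ∈ Finset.univ.filter (j < ·),
            ((1 - t⁻¹ * q * gridZ n q t ta ν j * gridZ n q t ta ν k)
              * (1 - t⁻¹ * q * gridZ n q t ta ν j * (gridZ n q t ta ν k)⁻¹)))) * hS

end Shift2
section Vexp

lemma gridZ_shift_j (n : ℕ) (q t ta : ℂ) (ν ν' : Fin n → ℕ) (j : Fin n)
    (hshift : ∀ i, ν' i = ν i + if i = j then 1 else 0) :
    gridZ n q t ta ν' j = q * gridZ n q t ta ν j := by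
  have hj' : ν' j = ν j + 1 := by have := hshift j; simp at this; omega
  unfold gridZ
  rw [hj', pow_succ]
  ring

lemma gridZ_shift_ne (n : ℕ) (q t ta : ℂ) (ν ν' : Fin n → ℕ) (j : Fin n)
    (hshift : ∀ i, ν' i = ν i + if i = j then 1 else 0) (k : Fin n) (hk : k ≠ j) :
    gridZ n q t ta ν' k = gridZ n q t ta ν k := by
  have : ν' k = ν k := by have := hshift k; simp [hk] at this; omega
  unfold gridZ
  rw [this]

lemma VNum_pos_expand (n : ℕ) (q t ta : ℂ) (T : Fin 4 → ℂ) (ν : Fin n → ℕ) (j : Fin n) :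
    VNum t T 1 j (gridZ n q t ta ν)
      = (∏ r, (1 - T r * gridZ n q t ta ν j))
        * ((∏ i ∈ Finset.univ.filter (· < j),
            ((1 - t * gridZ n q t ta ν j * gridZ n q t ta ν i)
              * (1 - t * gridZ n q t ta ν j * (gridZ n q t ta ν i)⁻¹)))
          * ∏ k ∈ Finset.univ.filter (j < ·),
            ((1 - t * gridZ n q t ta ν j * gridZ n q t ta ν k)
              * (1 - t * gridZ n q t ta ν j * (gridZ n q t ta ν k)⁻¹))) := by
  unfold VNum
  simp only [zpow_one]
  rw [prod_erase_split j]

lemma VDen_pos_expand (n : ℕ) (q t ta : ℂ) (ν : Fin n → ℕ) (j : Fin n) :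
    VDen q 1 j (gridZ n q t ta ν)
      = ((1 - gridZ n q t ta ν j * gridZ n q t ta ν j)
          * (1 - q * (gridZ n q t ta ν j * gridZ n q t ta ν j)))
        * ((∏ i ∈ Finset.univ.filter (· < j),
            ((1 - gridZ n q t ta ν j * gridZ n q t ta ν i)
              * (1 - gridZ n q t ta ν j * (gridZ n q t ta ν i)⁻¹)))
          * ∏ k ∈ Finset.univ.filter (j < ·),
            ((1 - gridZ n q t ta ν j * gridZ n q t ta ν k)
              * (1 - gridZ n q t ta ν j * (gridZ n q t ta ν k)⁻¹))) := by
  unfold VDen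
  simp only [zpow_one]
  rw [show (2 * 1 : ℤ) = ((2:ℕ):ℤ) from rfl, zpow_natCast, pow_two]
  rw [prod_erase_split j]

lemma VNum_neg_expand (n : ℕ) (q t ta : ℂ) (T : Fin 4 → ℂ) (ν ν' : Fin n → ℕ) (j : Fin n)
    (hshift : ∀ i, ν' i = ν i + if i = j then 1 else 0) :
    VNum t T (-1) j (gridZ n q t ta ν')
      = (∏ r, (1 - T r * (q * gridZ n q t ta ν j)⁻¹))
        * ((∏ i ∈ Finset.univ.filter (· < j),
            ((1 - t * (q * gridZ n q t ta ν j)⁻¹ * gridZ n q t ta ν i)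
              * (1 - t * (q * gridZ n q t ta ν j)⁻¹ * (gridZ n q t ta ν i)⁻¹)))
          * ∏ k ∈ Finset.univ.filter (j < ·),
            ((1 - t * (q * gridZ n q t ta ν j)⁻¹ * gridZ n q t ta ν k)
              * (1 - t * (q * gridZ n q t ta ν j)⁻¹ * (gridZ n q t ta ν k)⁻¹))) := by
  unfold VNum
  simp only [zpow_neg_one]
  rw [gridZ_shift_j n q t ta ν ν' j hshift]
  have he : (∏ k ∈ Finset.univ.erase j,
        ((1 - t * (q * gridZ n q t ta ν j)⁻¹ * gridZ n q t ta ν' k)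
          * (1 - t * (q * gridZ n q t ta ν j)⁻¹ * (gridZ n q t ta ν' k)⁻¹)))
      = ∏ k ∈ Finset.univ.erase j,
        ((1 - t * (q * gridZ n q t ta ν j)⁻¹ * gridZ n q t ta ν k)
          * (1 - t * (q * gridZ n q t ta ν j)⁻¹ * (gridZ n q t ta ν k)⁻¹)) :=
    Finset.prod_congr rfl fun k hk => by
      rw [gridZ_shift_ne n q t ta ν ν' j hshift k (Finset.mem_erase.mp hk).1]
  rw [he, prod_erase_split j]

lemma VDen_neg_expand (n : ℕ) (q t ta : ℂ) (ν ν' : Fin n → ℕ) (j : Fin n)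
    (hshift : ∀ i, ν' i = ν i + if i = j then 1 else 0) :
    VDen q (-1) j (gridZ n q t ta ν')
      = ((1 - ((q * gridZ n q t ta ν j) * (q * gridZ n q t ta ν j))⁻¹)
          * (1 - q * ((q * gridZ n q t ta ν j) * (q * gridZ n q t ta ν j))⁻¹))
        * ((∏ i ∈ Finset.univ.filter (· < j),
            ((1 - (q * gridZ n q t ta ν j)⁻¹ * gridZ n q t ta ν i)
              * (1 - (q * gridZ n q t ta ν j)⁻¹ * (gridZ n q t ta ν i)⁻¹)))
          * ∏ k ∈ Finset.univ.filter (j < ·),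
            ((1 - (q * gridZ n q t ta ν j)⁻¹ * gridZ n q t ta ν k)
              * (1 - (q * gridZ n q t ta ν j)⁻¹ * (gridZ n q t ta ν k)⁻¹))) := by
  unfold VDen
  simp only [zpow_neg_one]
  rw [show (2 * (-1) : ℤ) = -((2:ℕ):ℤ) from rfl, zpow_neg, zpow_natCast, pow_two]
  rw [gridZ_shift_j n q t ta ν ν' j hshift]
  have he : (∏ k ∈ Finset.univ.erase j,
        ((1 - (q * gridZ n q t ta ν j)⁻¹ * gridZ n q t ta ν' k)
          * (1 - (q * gridZ n q t ta ν j)⁻¹ * (gridZ n q t ta ν' k)⁻¹)))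
      = ∏ k ∈ Finset.univ.erase j,
        ((1 - (q * gridZ n q t ta ν j)⁻¹ * gridZ n q t ta ν k)
          * (1 - (q * gridZ n q t ta ν j)⁻¹ * (gridZ n q t ta ν k)⁻¹)) :=
    Finset.prod_congr rfl fun k hk => by
      rw [gridZ_shift_ne n q t ta ν ν' j hshift k (Finset.mem_erase.mp hk).1]
  rw [he, prod_erase_split j]

end Vexp
section Key

lemma myflip (x : ℂ) (hx : x ≠ 0) : (1 : ℂ) - x = -x * (1 - x⁻¹) := by field_simp; ring

lemma keyFb (q t zi zj : ℂ) (hq : q ≠ 0) (ht : t ≠ 0) (hzi : zi ≠ 0) (hzj : zj ≠ 0) :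
    (1 - t*zi*zj) * (1 - q*zi*zj) * (1 - zi*(q*zj)⁻¹) * (1 - t⁻¹*q*zi*(q*zj)⁻¹)
      * ((1 - t*(q*zj)⁻¹*zi) * (1 - t*(q*zj)⁻¹*zi⁻¹)) * ((1 - zj*zi) * (1 - zj*zi⁻¹))
    = (1 - zi*zj) * (1 - t⁻¹*q*zi*zj) * (1 - t*zi*(q*zj)⁻¹) * (1 - q*zi*(q*zj)⁻¹)
      * ((1 - t*zj*zi) * (1 - t*zj*zi⁻¹)) * ((1 - (q*zj)⁻¹*zi) * (1 - (q*zj)⁻¹*zi⁻¹)) := by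
  field_simp
  ring

lemma keyFa_red (q t zk zj : ℂ) (hq : q ≠ 0) (ht : t ≠ 0) (hzk : zk ≠ 0) (hzj : zj ≠ 0) :
    ((1 - q*zj*zk) * (1 - q*zj*zk⁻¹)) * ((1 - t*(q*zj)⁻¹*zk) * (1 - t*(q*zj)⁻¹*zk⁻¹))
    = (t*t) * (((1 - t⁻¹*q*zj*zk) * (1 - t⁻¹*q*zj*zk⁻¹))
        * ((1 - (q*zj)⁻¹*zk) * (1 - (q*zj)⁻¹*zk⁻¹))) := by
  have hwne : (q*zj) ≠ 0 := mul_ne_zero hq hzj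
  have hw : (q*zj) * (q*zj)⁻¹ = 1 := mul_inv_cancel₀ hwne
  have hk : zk * zk⁻¹ = 1 := mul_inv_cancel₀ hzk
  have f1 := myflip (q*zj*zk) (mul_ne_zero hwne hzk)
  have f2 := myflip (q*zj*zk⁻¹) (mul_ne_zero hwne (inv_ne_zero hzk))
  have f3 := myflip (t*(q*zj)⁻¹*zk) (mul_ne_zero (mul_ne_zero ht (inv_ne_zero hwne)) hzk)
  have f4 := myflip (t*(q*zj)⁻¹*zk⁻¹)
    (mul_ne_zero (mul_ne_zero ht (inv_ne_zero hwne)) (inv_ne_zero hzk))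
  rw [f1, f2, f3, f4]
  have i1 : (q*zj*zk)⁻¹ = (q*zj)⁻¹*zk⁻¹ := by rw [mul_inv]
  have i2 : (q*zj*zk⁻¹)⁻¹ = (q*zj)⁻¹*zk := by rw [mul_inv, inv_inv]
  have i3 : (t*(q*zj)⁻¹*zk)⁻¹ = t⁻¹*(q*zj)*zk⁻¹ := by rw [mul_inv, mul_inv, inv_inv]
  have i4 : (t*(q*zj)⁻¹*zk⁻¹)⁻¹ = t⁻¹*(q*zj)*zk := by rw [mul_inv, mul_inv, inv_inv, inv_inv]
  rw [i1, i2, i3, i4]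
  have hM : (-(q*zj*zk)) * (-(q*zj*zk⁻¹)) * (-(t*(q*zj)⁻¹*zk)) * (-(t*(q*zj)⁻¹*zk⁻¹)) = t*t := by
    linear_combination (t*t*((q*zj)*(q*zj)⁻¹*(zk*zk⁻¹) + 1) * ((q*zj)*(q*zj)⁻¹)) * hk
      + (t*t*((q*zj)*(q*zj)⁻¹*(zk*zk⁻¹)+1)) * hw
  linear_combination ((1 - (q*zj)⁻¹*zk⁻¹) * (1 - (q*zj)⁻¹*zk) * (1 - t⁻¹*(q*zj)*zk⁻¹)
    * (1 - t⁻¹*(q*zj)*zk)) * hM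

lemma keyJ_red (q zj T0 T1 T2 T3 : ℂ) (hq : q ≠ 0) (hzj : zj ≠ 0)
    (h0 : T0 ≠ 0) (h1 : T1 ≠ 0) (h2 : T2 ≠ 0) (h3 : T3 ≠ 0) :
    ((1 - q*(zj*zj)) * (1 - q*q*(zj*zj)))
      * ((1 - T0*(q*zj)⁻¹)*((1 - T1*(q*zj)⁻¹)*((1 - T2*(q*zj)⁻¹)*(1 - T3*(q*zj)⁻¹))))
    = (T0*(T1*(T2*T3))) * q⁻¹
      * ((1 - T0⁻¹*q*zj)*((1 - T1⁻¹*q*zj)*((1 - T2⁻¹*q*zj)*(1 - T3⁻¹*q*zj))))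
      * ((1 - ((q*zj)*(q*zj))⁻¹) * (1 - q*((q*zj)*(q*zj))⁻¹)) := by
  have hwne : (q*zj) ≠ 0 := mul_ne_zero hq hzj
  have hw : (q*zj) * (q*zj)⁻¹ = 1 := mul_inv_cancel₀ hwne
  have hQ : q * q⁻¹ = 1 := mul_inv_cancel₀ hq
  have g0 := myflip (T0*(q*zj)⁻¹) (mul_ne_zero h0 (inv_ne_zero hwne))
  have g1 := myflip (T1*(q*zj)⁻¹) (mul_ne_zero h1 (inv_ne_zero hwne))
  have g2 := myflip (T2*(q*zj)⁻¹) (mul_ne_zero h2 (inv_ne_zero hwne))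
  have g3 := myflip (T3*(q*zj)⁻¹) (mul_ne_zero h3 (inv_ne_zero hwne))
  have k1 := myflip (((q*zj)*(q*zj))⁻¹) (inv_ne_zero (mul_ne_zero hwne hwne))
  have k2 := myflip (q*((q*zj)*(q*zj))⁻¹) (mul_ne_zero hq (inv_ne_zero (mul_ne_zero hwne hwne)))
  rw [g0, g1, g2, g3, k1, k2]
  have i0 : (T0*(q*zj)⁻¹)⁻¹ = T0⁻¹*(q*zj) := by rw [mul_inv, inv_inv]
  have i1 : (T1*(q*zj)⁻¹)⁻¹ = T1⁻¹*(q*zj) := by rw [mul_inv, inv_inv]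
  have i2 : (T2*(q*zj)⁻¹)⁻¹ = T2⁻¹*(q*zj) := by rw [mul_inv, inv_inv]
  have i3 : (T3*(q*zj)⁻¹)⁻¹ = T3⁻¹*(q*zj) := by rw [mul_inv, inv_inv]
  have j1 : (((q*zj)*(q*zj))⁻¹)⁻¹ = (q*zj)*(q*zj) := inv_inv _
  have j2 : (q*((q*zj)*(q*zj))⁻¹)⁻¹ = q⁻¹*((q*zj)*(q*zj)) := by rw [mul_inv, inv_inv]
  rw [i0, i1, i2, i3, j1, j2]
  have e : q⁻¹*((q*zj)*(q*zj)) = q*(zj*zj) := by field_simp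
  rw [e]
  have hM : ((q*zj)*(q*zj))⁻¹ = (q*zj)⁻¹ * (q*zj)⁻¹ := by rw [mul_inv]
  rw [hM]
  linear_combination (-(T0*(T1*(T2*T3))) * ((q*zj)⁻¹)^4
    * (1 - q*(zj*zj)) * (1 - q*q*(zj*zj))
    * (1 - T0⁻¹*(q*zj)) * (1 - T1⁻¹*(q*zj)) * (1 - T2⁻¹*(q*zj)) * (1 - T3⁻¹*(q*zj))) * hQ

end Key
section KeyMain

lemma key (n : ℕ) (q t ta : ℂ) (T : Fin 4 → ℂ) (ν ν' : Fin n → ℕ) (j : Fin n)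
    (hq : q ≠ 0) (ht : t ≠ 0) (hta : ta ≠ 0) (hT : ∀ r, T r ≠ 0)
    (hshift : ∀ i, ν' i = ν i + if i = j then 1 else 0) :
    ((∏ r, (1 - T r * gridZ n q t ta ν j)) * ((∏ i ∈ Finset.univ.filter (· < j), (1 - t * gridZ n q t ta ν i * gridZ n q t ta ν j)) * ∏ k ∈ Finset.univ.filter (j < ·), ((1 - t * gridZ n q t ta ν j * gridZ n q t ta ν k) * (1 - t * gridZ n q t ta ν j * (gridZ n q t ta ν k)⁻¹)))) * (((1 - q * (gridZ n q t ta ν j * gridZ n q t ta ν j)) * (1 - q * q * (gridZ n q t ta ν j * gridZ n q t ta ν j))) * ((∏ i ∈ Finset.univ.filter (· < j), (1 - q * gridZ n q t ta ν i * gridZ n q t ta ν j)) * ∏ k ∈ Finset.univ.filter (j < ·), ((1 - q * gridZ n q t ta ν j * gridZ n q t ta ν k) * (1 - q * gridZ n q t ta ν j * (gridZ n q t ta ν k)⁻¹)))) * (∏ i ∈ Finset.univ.filter (· < j), (1 - gridZ n q t ta ν i * (q * gridZ n q t ta ν j)⁻¹)) * (∏ i ∈ Finset.univ.filter (· < j),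 (1 - t⁻¹ * q * gridZ n q t ta ν i * (q * gridZ n q t ta ν j)⁻¹))
      * (VNum t T (-1) j (gridZ n q t ta ν') * VDen q 1 j (gridZ n q t ta ν))
    = ((t ^ (n - 1 - (j:ℕ))) ^ 2 * (∏ r, T r) * q⁻¹)
      * ((((1 - gridZ n q t ta ν j * gridZ n q t ta ν j) * (1 - q * (gridZ n q t ta ν j * gridZ n q t ta ν j))) * ((∏ i ∈ Finset.univ.filter (· < j), (1 - gridZ n q t ta ν i * gridZ n q t ta ν j)) * ∏ k ∈ Finset.univ.filter (j < ·), ((1 - gridZ n q t ta ν j * gridZ n q t ta ν k) * (1 - gridZ n q t ta ν j * (gridZ n q t ta ν k)⁻¹)))) * ((∏ r, (1 - (T r)⁻¹ * q * gridZ n q t ta ν j)) * ((∏ i ∈ Finset.univ.filter (· < j), (1 - t⁻¹ * q * gridZ n q t ta ν i * gridZ n q t ta ν j)) * ∏ k ∈ Finset.univ.filter (j < ·), ((1 - t⁻¹ * q * gridZ n q t ta ν j * gridZ n q t ta ν k) * (1 - t⁻¹ * q * gridZ n q t ta ν j * (gridZ n q t ta ν k)⁻¹)))) * (∏ i ∈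 Finset.univ.filter (· < j), (1 - t * gridZ n q t ta ν i * (q * gridZ n q t ta ν j)⁻¹)) * (∏ i ∈ Finset.univ.filter (· < j), (1 - q * gridZ n q t ta ν i * (q * gridZ n q t ta ν j)⁻¹))
        * (VNum t T 1 j (gridZ n q t ta ν) * VDen q (-1) j (gridZ n q t ta ν'))) := by
  have hz : ∀ k : Fin n, gridZ n q t ta ν k ≠ 0 := gridZ_ne_zero hq ht hta ν
  rw [VNum_neg_expand n q t ta T ν ν' j hshift, VDen_pos_expand n q t ta ν j,
    VNum_pos_expand n q t ta T ν j, VDen_neg_expand n q t ta ν ν' j hshift]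
  have hFB : (∏ i ∈ Finset.univ.filter (· < j), ((1 - t * gridZ n q t ta ν i * gridZ n q t ta ν j) * (1 - q * gridZ n q t ta ν i * gridZ n q t ta ν j) * (1 - gridZ n q t ta ν i * (q * gridZ n q t ta ν j)⁻¹) * (1 - t⁻¹ * q * gridZ n q t ta ν i * (q * gridZ n q t ta ν j)⁻¹) * ((1 - t * (q * gridZ n q t ta ν j)⁻¹ * gridZ n q t ta ν i) * (1 - t * (q * gridZ n q t ta ν j)⁻¹ * (gridZ n q t ta ν i)⁻¹)) * ((1 - gridZ n q t ta ν j * gridZ n q t ta ν i) * (1 - gridZ n q t ta ν j * (gridZ n q t ta ν i)⁻¹)))) = ∏ i ∈ Finset.univ.filter (· < j), ((1 - gridZ n q t ta ν i * gridZ n q t ta ν j) * (1 - t⁻¹ * q * gridZ n q t ta ν i * gridZ n q t ta ν j) * (1 - t * gridZ n q t ta ν i * (q * gridZ n q t ta ν j)⁻¹) * (1 - q * gridZ n q t ta ν i * (q * gridZ n q t ta ν j)⁻¹) * ((1 - t * gridZ n q t ta ν j * gridZ n q t ta ν i) * (1 - t * gridZ n q t ta ν j * (gridZ n q t ta ν i)⁻¹))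 * ((1 - (q * gridZ n q t ta ν j)⁻¹ * gridZ n q t ta ν i) * (1 - (q * gridZ n q t ta ν j)⁻¹ * (gridZ n q t ta ν i)⁻¹))) :=
    Finset.prod_congr rfl fun i _ => keyFb q t (gridZ n q t ta ν i) (gridZ n q t ta ν j) hq ht (hz i) (hz j)
  have hFA : (∏ k ∈ Finset.univ.filter (j < ·), (((1 - t * gridZ n q t ta ν j * gridZ n q t ta ν k) * (1 - t * gridZ n q t ta ν j * (gridZ n q t ta ν k)⁻¹)) * ((1 - q * gridZ n q t ta ν j * gridZ n q t ta ν k) * (1 - q * gridZ n q t ta ν j * (gridZ n q t ta ν k)⁻¹)) * ((1 - t * (q * gridZ n q t ta ν j)⁻¹ * gridZ n q t ta ν k) * (1 - t * (q * gridZ n q t ta ν j)⁻¹ * (gridZ n q t ta ν k)⁻¹)) * ((1 - gridZ n q t ta ν j * gridZ n q t ta ν k) * (1 - gridZ n q t ta ν j * (gridZ n q t ta ν k)⁻¹)))) = ∏ k ∈ Finset.univ.filter (j < ·), ((t * t) * (((1 - gridZ n q t ta ν j * gridZ n q t ta ν k) * (1 - gridZ n q t ta ν j * (gridZ n q t ta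 ν k)⁻¹)) * ((1 - t⁻¹ * q * gridZ n q t ta ν j * gridZ n q t ta ν k) * (1 - t⁻¹ * q * gridZ n q t ta ν j * (gridZ n q t ta ν k)⁻¹)) * ((1 - t * gridZ n q t ta ν j * gridZ n q t ta ν k) * (1 - t * gridZ n q t ta ν j * (gridZ n q t ta ν k)⁻¹)) * (((1 - (q * gridZ n q t ta ν j)⁻¹ * gridZ n q t ta ν k) * (1 - (q * gridZ n q t ta ν j)⁻¹ * (gridZ n q t ta ν k)⁻¹))))) :=
    Finset.prod_congr rfl fun k _ => by
      linear_combination (((1 - t * gridZ n q t ta ν j * gridZ n q t ta ν k) * (1 - t * gridZ n q t ta ν j * (gridZ n q t ta ν k)⁻¹))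
        * ((1 - gridZ n q t ta ν j * gridZ n q t ta ν k) * (1 - gridZ n q t ta ν j * (gridZ n q t ta ν k)⁻¹)))
        * keyFa_red q t (gridZ n q t ta ν k) (gridZ n q t ta ν j) hq ht (hz k) (hz j)
  have hJ : ((1 - q * (gridZ n q t ta ν j * gridZ n q t ta ν j)) * (1 - q * q * (gridZ n q t ta ν j * gridZ n q t ta ν j))) * (∏ r, (1 - T r * (q * gridZ n q t ta ν j)⁻¹))
      = (∏ r, T r) * q⁻¹ * (∏ r, (1 - (T r)⁻¹ * q * gridZ n q t ta ν j))
        * ((1 - ((q * gridZ n q t ta ν j) * (q * gridZ n q t ta ν j))⁻¹) * (1 - q * ((q * gridZ n q t ta ν j) * (q * gridZ n q t ta ν j))⁻¹)) := by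
    simp only [Fin.prod_univ_four]
    linear_combination keyJ_red q (gridZ n q t ta ν j) (T 0) (T 1) (T 2) (T 3) hq (hz j)
      (hT 0) (hT 1) (hT 2) (hT 3)
  simp only [Finset.prod_mul_distrib] at hFB hFA ⊢
  rw [Finset.prod_const, card_filter_gt j] at hFA
  linear_combination (((∏ r, (1 - T r * gridZ n q t ta ν j)) * ((1 - q * (gridZ n q t ta ν j * gridZ n q t ta ν j)) * (1 - q * q * (gridZ n q t ta ν j * gridZ n q t ta ν j))) * (∏ r, (1 - T r * (q * gridZ n q t ta ν j)⁻¹)) * ((1 - gridZ n q t ta ν j * gridZ n q t ta ν j) * (1 - q * (gridZ n q t ta ν j * gridZ n q t ta ν j)))) * ((∏ k ∈ Finset.univ.filter (j < ·), (1 - t * gridZ n q t ta ν j * gridZ n q t ta ν k)) * (∏ k ∈ Finset.univ.filter (j < ·), (1 - t * gridZ n q t ta ν j * (gridZ n q t ta ν k)⁻¹)) * (∏ k ∈ Finset.univ.filter (j < ·), (1 - q * gridZ n q t ta ν j * gridZ n q t ta ν k)) * (∏ k ∈ Finset.univ.filter (j < ·), (1 - q * gridZ n q t ta ν j * (gridZ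 n q t ta ν k)⁻¹)) * (∏ k ∈ Finset.univ.filter (j < ·), (1 - t * (q * gridZ n q t ta ν j)⁻¹ * gridZ n q t ta ν k)) * (∏ k ∈ Finset.univ.filter (j < ·), (1 - t * (q * gridZ n q t ta ν j)⁻¹ * (gridZ n q t ta ν k)⁻¹)) * (∏ k ∈ Finset.univ.filter (j < ·), (1 - gridZ n q t ta ν j * gridZ n q t ta ν k)) * (∏ k ∈ Finset.univ.filter (j < ·), (1 - gridZ n q t ta ν j * (gridZ n q t ta ν k)⁻¹)))) * hFB
    + (((∏ r, (1 - T r * gridZ n q t ta ν j)) * ((1 - q * (gridZ n q t ta ν j * gridZ n q t ta ν j)) * (1 - q * q * (gridZ n q t ta ν j * gridZ n q t ta ν j))) * (∏ r, (1 - T r * (q * gridZ n q t ta ν j)⁻¹)) * ((1 - gridZ n q t ta ν j * gridZ n q t ta ν j) * (1 - q * (gridZ n q t ta ν j * gridZ n q t ta ν j)))) * ((∏ i ∈ Finset.univ.filter (· < j), (1 - gridZ n q t ta ν i * gridZ n q t ta ν j)) * (∏ i ∈ Finset.univ.filter (· < j), (1 - t⁻¹ * q * gridZ n q t ta ν i *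 gridZ n q t ta ν j)) * (∏ i ∈ Finset.univ.filter (· < j), (1 - t * gridZ n q t ta ν i * (q * gridZ n q t ta ν j)⁻¹)) * (∏ i ∈ Finset.univ.filter (· < j), (1 - q * gridZ n q t ta ν i * (q * gridZ n q t ta ν j)⁻¹)) * (∏ i ∈ Finset.univ.filter (· < j), (1 - t * gridZ n q t ta ν j * gridZ n q t ta ν i)) * (∏ i ∈ Finset.univ.filter (· < j), (1 - t * gridZ n q t ta ν j * (gridZ n q t ta ν i)⁻¹)) * (∏ i ∈ Finset.univ.filter (· < j), (1 - (q * gridZ n q t ta ν j)⁻¹ * gridZ n q t ta ν i)) * (∏ i ∈ Finset.univ.filter (· < j), (1 - (q * gridZ n q t ta ν j)⁻¹ * (gridZ n q t ta ν i)⁻¹)))) * hFA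
    + (((∏ i ∈ Finset.univ.filter (· < j), (1 - gridZ n q t ta ν i * gridZ n q t ta ν j)) * (∏ i ∈ Finset.univ.filter (· < j), (1 - t⁻¹ * q * gridZ n q t ta ν i * gridZ n q t ta ν j)) * (∏ i ∈ Finset.univ.filter (· < j), (1 - t * gridZ n q t ta ν i * (q * gridZ n q t ta ν j)⁻¹)) * (∏ i ∈ Finset.univ.filter (· < j), (1 - q * gridZ n q t ta ν i * (q * gridZ n q t ta ν j)⁻¹)) * (∏ i ∈ Finset.univ.filter (· < j), (1 - t * gridZ n q t ta ν j * gridZ n q t ta ν i)) * (∏ i ∈ Finset.univ.filter (· < j), (1 - t * gridZ n q t ta ν j * (gridZ n q t ta ν i)⁻¹)) * (∏ i ∈ Finset.univ.filter (· < j), (1 - (q * gridZ n q t ta ν j)⁻¹ * gridZ n q t ta ν i)) * (∏ i ∈ Finset.univ.filter (· < j), (1 - (q * gridZ n q t ta ν j)⁻¹ * (gridZ n q t ta ν i)⁻¹))) * ((∏ k ∈ Finset.univ.filter (j < ·), (1 - gridZ n q t ta ν j * gridZ n q t ta ν k)) * (∏ k ∈ Finset.univ.filter (j < ·), (1 - gridZ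 n q t ta ν j * (gridZ n q t ta ν k)⁻¹)) * (∏ k ∈ Finset.univ.filter (j < ·), (1 - t⁻¹ * q * gridZ n q t ta ν j * gridZ n q t ta ν k)) * (∏ k ∈ Finset.univ.filter (j < ·), (1 - t⁻¹ * q * gridZ n q t ta ν j * (gridZ n q t ta ν k)⁻¹)) * (∏ k ∈ Finset.univ.filter (j < ·), (1 - t * gridZ n q t ta ν j * gridZ n q t ta ν k)) * (∏ k ∈ Finset.univ.filter (j < ·), (1 - t * gridZ n q t ta ν j * (gridZ n q t ta ν k)⁻¹)) * (∏ k ∈ Finset.univ.filter (j < ·), (1 - (q * gridZ n q t ta ν j)⁻¹ * gridZ n q t ta ν k)) * (∏ k ∈ Finset.univ.filter (j < ·), (1 - (q * gridZ n q t ta ν j)⁻¹ * (gridZ n q t ta ν k)⁻¹))) * (∏ r, (1 - T r * gridZ n q t ta ν j)) * ((1 - gridZ n q t ta ν j * gridZ n q t ta ν j) * (1 - q * (gridZ n q t ta ν j * gridZ n q t ta ν j))) * ((t * t) ^ (n - 1 - (j:ℕ)))) * hJ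

end KeyMain
section MainLemma

lemma main (n : ℕ) (a : Fin 4) (ν ν' : Fin n → ℕ) (j : Fin n)
    (hshift : ∀ i, ν' i = ν i + if i = j then 1 else 0)
    (hν : isDominant ν) (hν' : isDominant ν') :
    ∃ P : MvPolynomial (Fin 6) ℂ, P ≠ 0 ∧
      ∀ (q t : ℂ) (T : Fin 4 → ℂ),
        MvPolynomial.eval ![q, t, T 0, T 1, T 2, T 3] P ≠ 0 →
        weightQR n q t (T a) T ν' * Vcoef q t T (-1) j (gridZ n q t (T a) ν') =
          weightQR n q t (T a) T ν * Vcoef q t T 1 j (gridZ n q t (T a) ν) := by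
  refine ⟨Ppoly (2 * (∑ i, ν i) + 10) (2 * n + 10),
    Ppoly_ne_zero _ _, ?_⟩
  intro q t T hP
  obtain ⟨hq, ht, hT, H0⟩ := Ppoly_spec _ _ q t T hP
  have H : Hyp (2 * (∑ i, ν i) + 10) (2 * n + 10) q t T := H0
  have hta : T a ≠ 0 := hT a
  have hz : ∀ k : Fin n, gridZ n q t (T a) ν k ≠ 0 := gridZ_ne_zero hq ht hta ν
  have hS : ∀ i, ν i ≤ ∑ i, ν i := fun i =>
    Finset.single_le_sum (f := fun i => ν i) (fun _ _ => Nat.zero_le _) (Finset.mem_univ i)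
  have hS' : ∀ i, ν' i ≤ (∑ i, ν i) + 1 := fun i => by
    have h1 := hshift i; have h2 := hS i
    by_cases hij : i = j
    · subst hij; simp at h1; omega
    · simp [hij] at h1; omega
  have hCpN : CpN n q t (T a) ν ≠ 0 := CpN_ne_zero H hq ht hT a _ ν hS (by omega) (by omega)
  have hCpN' : CpN n q t (T a) ν' ≠ 0 :=
    CpN_ne_zero H hq ht hT a ((∑ i, ν i) + 1) ν' hS' (by omega) (by omega)
  have hCmN : CmN n q t (T a) T ν ≠ 0 := CmN_ne_zero H hq ht hT a _ ν hS (by omega) (by omega)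
  have hCmN' : CmN n q t (T a) T ν' ≠ 0 :=
    CmN_ne_zero H hq ht hT a ((∑ i, ν i) + 1) ν' hS' (by omega) (by omega)
  have hc0 : c0sq q t T ν ≠ 0 := c0sq_ne_zero hq ht hT ν
  have hc0' : c0sq q t T ν' ≠ 0 := c0sq_ne_zero hq ht hT ν'
  have hVDp : VDen q 1 j (gridZ n q t (T a) ν) ≠ 0 := VDen_one_ne_zero H hq ht hT a _ ν hS (by omega) (by omega) j
  have hVDm : VDen q (-1) j (gridZ n q t (T a) ν') ≠ 0 :=
    VDen_neg_one_ne_zero H hq ht hT a ((∑ i, ν i) + 1) ν' hS' (by omega) (by omega) j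
  have hdomj : ∀ i : Fin n, i < j → ν j + 1 ≤ ν i := fun i hij => by
    have h1 := hν' i j (le_of_lt hij)
    have h2 := hshift i; have h3 := hshift j
    simp [Fin.ne_of_lt hij] at h2
    simp at h3
    omega
  have hd1 : (∏ i ∈ Finset.univ.filter (· < j), (1 - t * gridZ n q t (T a) ν i * (q * gridZ n q t (T a) ν j)⁻¹)) ≠ 0 := by
    rw [Finset.prod_ne_zero_iff]
    intro i hi
    have hij : i < j := by simpa using hi
    have e1 := hS i; have e2 := hS j; have e3 := i.isLt; have e4 := j.isLt
    have hij' : (i:ℕ) < (j:ℕ) := hij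
    rw [show t * gridZ n q t (T a) ν i * (q * gridZ n q t (T a) ν j)⁻¹
        = q ^ (ν i) * (q ^ (ν j + 1))⁻¹ * t ^ ((n - 1 - (i:ℕ)) + 1) * (t ^ (n - 1 - (j:ℕ)))⁻¹
          * (T a ^ 1 * (T a ^ 1)⁻¹) from by
      unfold gridZ tauv; rw [pow_succ, pow_succ]; ring]
    exact H.facA hq ht hT a _ _ _ _ _ _ (by omega) (by omega) (by omega) (by omega)
      (by omega) (by omega) (by right; left; omega)
  have hd2 : (∏ i ∈ Finset.univ.filter (· < j), (1 - q * gridZ n q t (T a) ν i * (q * gridZ n q t (T a) ν j)⁻¹)) ≠ 0 := by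
    rw [Finset.prod_ne_zero_iff]
    intro i hi
    have hij : i < j := by simpa using hi
    have e1 := hS i; have e2 := hS j; have e3 := i.isLt; have e4 := j.isLt
    have hij' : (i:ℕ) < (j:ℕ) := hij
    rw [show q * gridZ n q t (T a) ν i * (q * gridZ n q t (T a) ν j)⁻¹
        = q ^ (ν i + 1) * (q ^ (ν j + 1))⁻¹ * t ^ (n - 1 - (i:ℕ)) * (t ^ (n - 1 - (j:ℕ)))⁻¹
          * (T a ^ 1 * (T a ^ 1)⁻¹) from by
      unfold gridZ tauv; rw [pow_succ, pow_succ]; ring]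
    exact H.facA hq ht hT a _ _ _ _ _ _ (by omega) (by omega) (by omega) (by omega)
      (by omega) (by omega) (by right; left; omega)
  have hd3 : (∏ i ∈ Finset.univ.filter (· < j), (1 - gridZ n q t (T a) ν i * (q * gridZ n q t (T a) ν j)⁻¹)) ≠ 0 := by
    rw [Finset.prod_ne_zero_iff]
    intro i hi
    have hij : i < j := by simpa using hi
    have e1 := hS i; have e2 := hS j; have e3 := i.isLt; have e4 := j.isLt
    have hij' : (i:ℕ) < (j:ℕ) := hij
    rw [show gridZ n q t (T a) ν i * (q * gridZ n q t (T a) ν j)⁻¹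
        = q ^ (ν i) * (q ^ (ν j + 1))⁻¹ * t ^ (n - 1 - (i:ℕ)) * (t ^ (n - 1 - (j:ℕ)))⁻¹
          * (T a ^ 1 * (T a ^ 1)⁻¹) from by
      unfold gridZ tauv; rw [pow_succ]; ring]
    exact H.facA hq ht hT a _ _ _ _ _ _ (by omega) (by omega) (by omega) (by omega)
      (by omega) (by omega) (by right; left; omega)
  have hd4 : (∏ i ∈ Finset.univ.filter (· < j), (1 - t⁻¹ * q * gridZ n q t (T a) ν i * (q * gridZ n q t (T a) ν j)⁻¹)) ≠ 0 := by
    rw [Finset.prod_ne_zero_iff]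
    intro i hi
    have hij : i < j := by simpa using hi
    have e1 := hS i; have e2 := hS j; have e3 := i.isLt; have e4 := j.isLt
    have hij' : (i:ℕ) < (j:ℕ) := hij
    have hdo := hdomj i hij
    rw [show t⁻¹ * q * gridZ n q t (T a) ν i * (q * gridZ n q t (T a) ν j)⁻¹
        = q ^ (ν i + 1) * (q ^ (ν j + 1))⁻¹ * t ^ (n - 1 - (i:ℕ)) * (t ^ ((n - 1 - (j:ℕ)) + 1))⁻¹
          * (T a ^ 1 * (T a ^ 1)⁻¹) from by
      unfold gridZ tauv; rw [pow_succ, pow_succ, pow_succ]; ring]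
    exact H.facA hq ht hT a _ _ _ _ _ _ (by omega) (by omega) (by omega) (by omega)
      (by omega) (by omega) (by left; omega)
  have T1 := CpD_shift n q t (T a) T ν ν' j hq hshift hν hν'
  have T2 := CmD_shift n q t (T a) ν ν' j hq hshift hν hν'
  have T3 := CpN_shift n q t (T a) ν ν' j hq hshift hν hν'
  have T4 := CmN_shift n q t (T a) T ν ν' j hq hshift hν hν'
  have T5 := c0sq_shift n q t T ν ν' j hshift
  have K := key n q t (T a) T ν ν' j hq ht hta hT hshift
  unfold weightQR Vcoef
  rw [div_mul_div_comm, div_mul_div_comm,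
    div_eq_div_iff
      (mul_ne_zero (mul_ne_zero (mul_ne_zero hc0' hCpN') hCmN') hVDm)
      (mul_ne_zero (mul_ne_zero (mul_ne_zero hc0 hCpN) hCmN) hVDp)]
  apply mul_right_cancel₀
    (mul_ne_zero (mul_ne_zero (mul_ne_zero hd1 hd2) hd3) hd4)
  linear_combination
    (CmD n q t (T a) ν' * VNum t T (-1) j (gridZ n q t (T a) ν') * c0sq q t T ν * CpN n q t (T a) ν * CmN n q t (T a) T ν * VDen q 1 j (gridZ n q t (T a) ν) * (∏ i ∈ Finset.univ.filter (· < j), (1 - q * gridZ n q t (T a) ν i * (q * gridZ n q t (T a) ν j)⁻¹)) * (∏ i ∈ Finset.univ.filter (· < j), (1 - gridZ n q t (T a) ν i * (q * gridZ n q t (T a) ν j)⁻¹)) * (∏ i ∈ Finset.univ.filter (· < j), (1 - t⁻¹ * q * gridZ n q t (T a) ν i * (q * gridZ n q t (T a) ν j)⁻¹))) * T1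
    + (CpD n q t (T a) T ν * ((∏ r, (1 - T r * gridZ n q t (T a) ν j)) * ((∏ i ∈ Finset.univ.filter (· < j), (1 - t * gridZ n q t (T a) ν i * gridZ n q t (T a) ν j)) * ∏ k ∈ Finset.univ.filter (j < ·), ((1 - t * gridZ n q t (T a) ν j * gridZ n q t (T a) ν k) * (1 - t * gridZ n q t (T a) ν j * (gridZ n q t (T a) ν k)⁻¹)))) * VNum t T (-1) j (gridZ n q t (T a) ν') * c0sq q t T ν * CpN n q t (T a) ν * CmN n q t (T a) T ν * VDen q 1 j (gridZ n q t (T a) ν) * (∏ i ∈ Finset.univ.filter (· < j), (1 - gridZ n q t (T a) ν i * (q * gridZ n q t (T a) ν j)⁻¹)) * (∏ i ∈ Finset.univ.filter (· < j), (1 - t⁻¹ * q * gridZ n q t (T a) ν i * (q * gridZ n q t (T a) ν j)⁻¹))) * T2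
    + (CpD n q t (T a) T ν * CmD n q t (T a) ν * c0sq q t T ν * CpN n q t (T a) ν * CmN n q t (T a) T ν) * K
    - (CpD n q t (T a) T ν * CmD n q t (T a) ν * VNum t T 1 j (gridZ n q t (T a) ν) * c0sq q t T ν * ((t ^ (n - 1 - (j:ℕ))) ^ 2 * (∏ r, T r) * q⁻¹) * CmN n q t (T a) T ν' * (∏ i ∈ Finset.univ.filter (· < j), (1 - t⁻¹ * q * gridZ n q t (T a) ν i * (q * gridZ n q t (T a) ν j)⁻¹)) * VDen q (-1) j (gridZ n q t (T a) ν') * (∏ i ∈ Finset.univ.filter (· < j), (1 - t * gridZ n q t (T a) ν i * (q * gridZ n q t (T a) ν j)⁻¹)) * (∏ i ∈ Finset.univ.filter (· < j), (1 - q * gridZ n q t (T a) ν i * (q * gridZ n q t (T a) ν j)⁻¹))) * T3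
    - (CpD n q t (T a) T ν * CmD n q t (T a) ν * VNum t T 1 j (gridZ n q t (T a) ν) * c0sq q t T ν * ((t ^ (n - 1 - (j:ℕ))) ^ 2 * (∏ r, T r) * q⁻¹) * CpN n q t (T a) ν * (((1 - gridZ n q t (T a) ν j * gridZ n q t (T a) ν j) * (1 - q * (gridZ n q t (T a) ν j * gridZ n q t (T a) ν j))) * ((∏ i ∈ Finset.univ.filter (· < j), (1 - gridZ n q t (T a) ν i * gridZ n q t (T a) ν j)) * ∏ k ∈ Finset.univ.filter (j < ·), ((1 - gridZ n q t (T a) ν j * gridZ n q t (T a) ν k) * (1 - gridZ n q t (T a) ν j * (gridZ n q t (T a) ν k)⁻¹)))) * VDen q (-1) j (gridZ n q t (T a) ν') * (∏ i ∈ Finset.univ.filter (· < j), (1 - t * gridZ n q t (T a) ν i * (q * gridZ n q t (T a) ν j)⁻¹)) * (∏ i ∈ Finset.univ.filter (· < j), (1 - q * gridZ n q t (T a) ν i * (q * gridZ n q t (T a) ν j)⁻¹))) * T4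
    - (CpD n q t (T a) T ν * CmD n q t (T a) ν * VNum t T 1 j (gridZ n q t (T a) ν) * CpN n q t (T a) ν' * (∏ i ∈ Finset.univ.filter (· < j), (1 - gridZ n q t (T a) ν i * (q * gridZ n q t (T a) ν j)⁻¹)) * CmN n q t (T a) T ν' * (∏ i ∈ Finset.univ.filter (· < j), (1 - t⁻¹ * q * gridZ n q t (T a) ν i * (q * gridZ n q t (T a) ν j)⁻¹)) * VDen q (-1) j (gridZ n q t (T a) ν') * (∏ i ∈ Finset.univ.filter (· < j), (1 - t * gridZ n q t (T a) ν i * (q * gridZ n q t (T a) ν j)⁻¹)) * (∏ i ∈ Finset.univ.filter (· < j), (1 - q * gridZ n q t (T a) ν i * (q * gridZ n q t (T a) ν j)⁻¹))) * T5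

end MainLemma
/-- Let `ε = ±1`, `1 ≤ j ≤ n`, and suppose `ν` and `ν + ε e_j` both lie in
the cone `Λ`.  Then, as an identity of rational expressions in the parameters
`q, t, t₀, …, t₃` (i.e. at every parameter point off the zero set of some nonzero polynomial),
`Δ^{qR}(ν + ε e_j) V_{-ε j}(τ q^{ν + ε e_j}) = Δ^{qR}(ν) V_{ε j}(τ q^ν)`.
No truncation condition is needed. -/
theorem statement17 (n : ℕ) (hn : 1 ≤ n) (a : Fin 4)
    (ν ν' : Fin n → ℕ) (j : Fin n) (ε : ℤ) (hε : ε = 1 ∨ ε = -1)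
    (hshift : ∀ i, (ν' i : ℤ) = (ν i : ℤ) + if i = j then ε else 0)
    (hν : isDominant ν) (hν' : isDominant ν') :
    ∃ P : MvPolynomial (Fin 6) ℂ, P ≠ 0 ∧
      ∀ (q t : ℂ) (T : Fin 4 → ℂ),
        MvPolynomial.eval ![q, t, T 0, T 1, T 2, T 3] P ≠ 0 →
        weightQR n q t (T a) T ν' * Vcoef q t T (-ε) j (gridZ n q t (T a) ν') =
          weightQR n q t (T a) T ν * Vcoef q t T ε j (gridZ n q t (T a) ν) := by
  rcases hε with rfl | rfl
  · have hsh : ∀ i, ν' i = ν i + if i = j then 1 else 0 := by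
      intro i
      have h0 := hshift i
      by_cases hij : i = j
      · subst hij; simp at h0 ⊢; omega
      · simp [hij] at h0 ⊢; omega
    obtain ⟨P, hP0, hmain⟩ := main n a ν ν' j hsh hν hν'
    exact ⟨P, hP0, fun q t T h => hmain q t T h⟩
  · have hsh : ∀ i, ν i = ν' i + if i = j then 1 else 0 := by
      intro i
      have h0 := hshift i
      by_cases hij : i = j
      · subst hij; simp at h0 ⊢; omega
      · simp [hij] at h0 ⊢; omega
    obtain ⟨P, hP0, hmain⟩ := main n a ν' ν j hsh hν' hν
    refine ⟨P, hP0, fun q t T h => ?_⟩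
    have h2 := (hmain q t T h).symm
    simpa using h2

end QR
end
end
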